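/- arXiv:1612.06693 — 5 statements merged into one kernel-verified Lean document; each statement's English description precedes it below -/
import Mathlib

section
/- Every MILP-representable set is a DMIC set. That is, if S ⊆ ℝ^n is MILP-representable, then S is a disjunctive mixed-integer Chvátal set (with q = 0 integer coordinates, i.e., S is a finite union of sets each described by finitely many affine Chvátal inequalities in x ∈ ℝ^n). -/
/-!
The continuous variables are removed by Fourier–Motzkin elimination, which keeps every
constraint in the form `f x + (linear form in the remaining variables) ≤ β` with `f` an affine
Chvátal function. The integer variables are then removed one at a time: an integer `w` with
lower bounds `ℓ_I` and upper bounds `u_J` exists iff `⌈ℓ_I⌉ ≤ u_J` for all pairs, and `⌈ℓ_I⌉` is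
again of the above form provided the other integer variables enter `ℓ_I` with integer
coefficients. This is arranged by writing each of them as `M * v + t` with a residue
`0 ≤ t < M`, `M` a common denominator, at the price of a finite disjunction over the residues.
-/

/-- Binary tree representation of an affine Chvátal function on `ℝ^n`. -/
inductive ChvatalTree (n : ℕ) : Type
  | leaf (a : Fin n → ℚ) (c : ℚ) : ChvatalTree n
  | ceil (t : ChvatalTree n) : ChvatalTree n
  | scale (a : ℚ) (t : ChvatalTree n) : ChvatalTree n
  | comb (a b : ℚ) (t₁ t₂ : ChvatalTree n) : ChvatalTree n

namespace ChvatalTree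

/-- The function computed by the tree. -/
noncomputable def eval {n : ℕ} : ChvatalTree n → (Fin n → ℝ) → ℝ
  | leaf a c, x => (∑ j, (a j : ℝ) * x j) + (c : ℝ)
  | ceil t, x => (⌈t.eval x⌉ : ℝ)
  | scale a t, x => (a : ℝ) * t.eval x
  | comb a b t₁ t₂, x => (a : ℝ) * t₁.eval x + (b : ℝ) * t₂.eval x

/-- All multiplicative edge labels are nonnegative rationals. -/
def Valid {n : ℕ} : ChvatalTree n → Prop
  | leaf _ _ => True
  | ceil t => t.Valid
  | scale a t => 0 ≤ a ∧ t.Valid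
  | comb a b t₁ t₂ => 0 ≤ a ∧ 0 ≤ b ∧ t₁.Valid ∧ t₂.Valid

/-- The ceiling count of the tree. -/
def cc {n : ℕ} : ChvatalTree n → ℕ
  | leaf _ _ => 0
  | ceil t => t.cc + 1
  | scale _ t => t.cc
  | comb _ _ t₁ t₂ => t₁.cc + t₂.cc

/-- All leaves are homogeneous linear functions. -/
def Linear {n : ℕ} : ChvatalTree n → Prop
  | leaf _ c => c = 0
  | ceil t => t.Linear
  | scale _ t => t.Linear
  | comb _ _ t₁ t₂ => t₁.Linear ∧ t₂.Linear

end ChvatalTree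

/-- `f` is an affine Chvátal function. -/
def IsAffineChvatal {n : ℕ} (f : (Fin n → ℝ) → ℝ) : Prop :=
  ∃ T : ChvatalTree n, T.Valid ∧ ∀ x, T.eval x = f x

/-- `f` is a Chvátal function (all leaves homogeneous linear). -/
def IsChvatal {n : ℕ} (f : (Fin n → ℝ) → ℝ) : Prop :=
  ∃ T : ChvatalTree n, T.Valid ∧ T.Linear ∧ ∀ x, T.eval x = f x

/-- `S ⊆ ℝ^n` is the projection of a mixed-integer linear set. -/
def MILPRepresentable {n : ℕ} (S : Set (Fin n → ℝ)) : Prop :=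
  ∃ (m p q : ℕ) (A : Matrix (Fin m) (Fin n) ℚ) (B : Matrix (Fin m) (Fin p) ℚ)
    (C : Matrix (Fin m) (Fin q) ℚ) (d : Fin m → ℚ),
    S = {x | ∃ (y : Fin p → ℝ) (z : Fin q → ℤ), ∀ i : Fin m,
      (d i : ℝ) ≤ (∑ j, (A i j : ℝ) * x j) + (∑ j, (B i j : ℝ) * y j)
        + (∑ j, (C i j : ℝ) * (z j : ℝ))}

theorem exists_between_of_finite {ι κ α : Type*} [LinearOrder α] [Nonempty α]
    {s : Set ι} {t : Set κ} (hs : s.Finite) (ht : t.Finite) (l : ι → α) (u : κ → α) :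
    (∃ y, (∀ i ∈ s, l i ≤ y) ∧ ∀ j ∈ t, y ≤ u j) ↔ ∀ i ∈ s, ∀ j ∈ t, l i ≤ u j := by
  refine ⟨fun ⟨y, hl, hu⟩ i hi j hj => (hl i hi).trans (hu j hj), fun h => ?_⟩
  rcases s.eq_empty_or_nonempty with rfl | hs₀
  · rcases t.eq_empty_or_nonempty with rfl | ht₀
    · exact ⟨Classical.arbitrary α, by simp⟩
    obtain ⟨j, hj, hmin⟩ := Set.exists_min_image t u ht ht₀
    exact ⟨u j, by simp, hmin⟩
  obtain ⟨i, hi, hmax⟩ := Set.exists_max_image s l hs hs₀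
  exact ⟨l i, hmax, h i hi⟩

theorem add_mul_nonpos_iff_of_neg {a g y : ℝ} (hg : g < 0) : a + g * y ≤ 0 ↔ a / -g ≤ y := by
  rw [div_le_iff₀ (neg_pos.mpr hg)]
  constructor <;> intro h <;> linarith

theorem add_mul_nonpos_iff_of_pos {a g y : ℝ} (hg : 0 < g) : a + g * y ≤ 0 ↔ y ≤ -a / g := by
  rw [le_div_iff₀ hg]
  constructor <;> intro h <;> linarith

/-- The variable ranges over `α` embedded in `ℝ` by `e`; `ρ` and `σ` round up and down into `α`
(identities for `α = ℝ`, `⌈·⌉` and `⌊·⌋` for `α = ℤ`). -/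
theorem exists_forall_add_mul_nonpos_iff {ι α : Type*} [LinearOrder α] [Nonempty α]
    {e : α → ℝ} {ρ σ : ℝ → α} (hρ : GaloisConnection ρ e) (hσ : GaloisConnection e σ)
    {s : Set ι} (hs : s.Finite) (a g : ι → ℝ) :
    (∃ w, ∀ i ∈ s, a i + g i * e w ≤ 0) ↔
      (∀ i ∈ s, g i = 0 → a i ≤ 0) ∧
        ∀ i ∈ s, g i < 0 → ∀ j ∈ s, 0 < g j → g j * e (ρ (a i / -g i)) + a j ≤ 0 := by
  have row : ∀ i w, a i + g i * e w ≤ 0 ↔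
      (g i = 0 → a i ≤ 0) ∧ (g i < 0 → ρ (a i / -g i) ≤ w) ∧ (0 < g i → w ≤ σ (-a i / g i)) := by
    intro i w
    rw [hρ, ← hσ]
    rcases lt_trichotomy (g i) 0 with hg | hg | hg
    · simp [hg, hg.ne, hg.not_gt, add_mul_nonpos_iff_of_neg hg]
    · simp [hg]
    · simp [hg, hg.ne', hg.not_gt, add_mul_nonpos_iff_of_pos hg]
  have bounds := exists_between_of_finite (hs.sep fun i => g i < 0) (hs.sep fun j => 0 < g j)
    (fun i => ρ (a i / -g i)) (fun j => σ (-a j / g j))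
  simp only [Set.mem_sep_iff, and_imp] at bounds
  simp only [row, forall_and, exists_and_left, bounds]
  refine and_congr Iff.rfl (forall₃_congr fun i _ _ => forall₃_congr fun j _ hgj => ?_)
  rw [← hσ, ← add_mul_nonpos_iff_of_pos hgj, add_comm, mul_comm]

theorem exists_pos_nat_mul_eq_int (qs : List ℚ) :
    ∃ M : ℕ, 0 < M ∧ ∀ q ∈ qs, ∃ m : ℤ, (M : ℚ) * q = m := by
  refine ⟨(qs.map Rat.den).prod, List.prod_pos fun _ h => ?_, fun q hq => ?_⟩
  · obtain ⟨q, _, rfl⟩ := List.mem_map.mp h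
    exact q.den_pos
  · obtain ⟨c, hc⟩ := List.dvd_prod (List.mem_map_of_mem (f := Rat.den) hq)
    refine ⟨c * q.num, ?_⟩
    rw [hc]
    push_cast
    rw [← Rat.mul_den_eq_num]
    ring

theorem exists_int_iff_exists_residue {k M : ℕ} (hM : 0 < M) {P : (Fin (k + 1) → ℤ) → Prop} :
    (∃ z, P z) ↔ ∃ (t : Fin k → Fin M) (v : Fin k → ℤ) (w : ℤ),
      P (Fin.snoc (fun j => M * v j + t j) w) := by
  refine ⟨fun ⟨z, hz⟩ => ?_, fun ⟨_, _, _, h⟩ => ⟨_, h⟩⟩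
  have hM' : (0 : ℤ) < M := by exact_mod_cast hM
  have hres : ∀ a : ℤ, 0 ≤ a % M ∧ a % M < M := fun a =>
    ⟨Int.emod_nonneg a hM'.ne', Int.emod_lt_of_pos a hM'⟩
  refine ⟨fun j => ⟨(z j.castSucc % M).toNat, by have := hres (z j.castSucc); omega⟩,
    fun j => z j.castSucc / M, z (Fin.last k), ?_⟩
  convert hz
  conv_rhs => rw [← Fin.snoc_init_self z]
  congr 1
  funext j
  have := hres (z j.castSucc)
  simp only [Fin.init, Int.toNat_of_nonneg this.1, Int.mul_ediv_add_emod]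

def IsDMIC {n : ℕ} (S : Set (Fin n → ℝ)) : Prop :=
  ∃ (t m : ℕ) (f : Fin t → Fin m → ChvatalTree n) (b : Fin t → Fin m → ℝ),
    (∀ j i, (f j i).Valid) ∧ S = ⋃ j : Fin t, {x | ∀ i : Fin m, (f j i).eval x ≤ b j i}

theorem IsDMIC.iUnion {n : ℕ} {ι : Type*} [Finite ι] {S : ι → Set (Fin n → ℝ)}
    (h : ∀ i, IsDMIC (S i)) : IsDMIC (⋃ i, S i) := by
  classical
  choose t m f b hf hS using h
  have := Fintype.ofFinite ι
  let M := Finset.univ.sup m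
  have hmM : ∀ i, m i ≤ M := fun i => Finset.le_sup (Finset.mem_univ i)
  let e := Fintype.equivFin (Σ i, Fin (t i))
  -- every system is padded to `M` inequalities by copies of `0 ≤ 0`
  let F : (Σ i, Fin (t i)) → Fin M → ChvatalTree n := fun j r =>
    if h : (r : ℕ) < m j.1 then f j.1 j.2 ⟨r, h⟩ else .leaf 0 0
  let G : (Σ i, Fin (t i)) → Fin M → ℝ := fun j r =>
    if h : (r : ℕ) < m j.1 then b j.1 j.2 ⟨r, h⟩ else 0
  have padded : ∀ j x, (∀ r, (F j r).eval x ≤ G j r) ↔ ∀ r, (f j.1 j.2 r).eval x ≤ b j.1 j.2 r := by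
    refine fun j x => ⟨fun h r => ?_, fun h r => ?_⟩
    · simpa [F, G, r.2] using h ⟨r, r.2.trans_le (hmM j.1)⟩
    · by_cases hr : (r : ℕ) < m j.1
      · simpa [F, G, hr] using h ⟨r, hr⟩
      · simp [F, G, hr, ChvatalTree.eval]
  refine ⟨Fintype.card _, M, fun j => F (e.symm j), fun j => G (e.symm j), fun j r => ?_, ?_⟩
  · simp only [F]
    split_ifs
    exacts [hf _ _ _, trivial]
  · ext x
    simp only [hS, Set.mem_iUnion, Set.mem_ofPred_eq, padded]
    exact Sigma.exists.symm.trans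
      (e.symm.surjective.exists (p := fun s => ∀ r, (f s.1 s.2 r).eval x ≤ b s.1 s.2 r))

/-- The inequality `lhs x + ∑ j, coeff j * u j ≤ rhs` in `x ∈ ℝⁿ` and auxiliary variables
`u ∈ ℝᵏ`. -/
structure ChvatalIneq (n k : ℕ) where
  lhs : ChvatalTree n
  valid : lhs.Valid
  coeff : Fin k → ℚ
  rhs : ℚ

namespace ChvatalIneq

variable {n k : ℕ}

noncomputable def excess (I : ChvatalIneq n k) (x : Fin n → ℝ) (u : Fin k → ℝ) : ℝ :=
  I.lhs.eval x + ∑ j, (I.coeff j : ℝ) * u j - I.rhs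

instance : Add (ChvatalIneq n k) :=
  ⟨fun I J => ⟨.comb 1 1 I.lhs J.lhs, ⟨zero_le_one, zero_le_one, I.valid, J.valid⟩,
    I.coeff + J.coeff, I.rhs + J.rhs⟩⟩

instance : SMul ℚ≥0 (ChvatalIneq n k) :=
  ⟨fun c I => ⟨.scale c I.lhs, ⟨c.coe_nonneg, I.valid⟩, (c : ℚ) • I.coeff, c * I.rhs⟩⟩

def ceil (I : ChvatalIneq n k) : ChvatalIneq n k :=
  ⟨.ceil (.comb 1 1 I.lhs (.leaf 0 (-I.rhs))), ⟨zero_le_one, zero_le_one, I.valid, trivial⟩,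
    I.coeff, 0⟩

def lastCoeff (I : ChvatalIneq n (k + 1)) : ℚ := I.coeff (Fin.last k)

def dropLast (I : ChvatalIneq n (k + 1)) : ChvatalIneq n k :=
  ⟨I.lhs, I.valid, Fin.init I.coeff, I.rhs⟩

def comap (a b : Fin k → ℚ) (I : ChvatalIneq n k) : ChvatalIneq n k :=
  ⟨I.lhs, I.valid, fun j => a j * I.coeff j, I.rhs - ∑ j, I.coeff j * b j⟩

@[simp] theorem coeff_add (I J : ChvatalIneq n k) : (I + J).coeff = I.coeff + J.coeff := rfl
@[simp] theorem rhs_add (I J : ChvatalIneq n k) : (I + J).rhs = I.rhs + J.rhs := rfl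
@[simp] theorem lhs_smul (c : ℚ≥0) (I : ChvatalIneq n k) : (c • I).lhs = .scale c I.lhs := rfl
@[simp] theorem coeff_smul (c : ℚ≥0) (I : ChvatalIneq n k) : (c • I).coeff = (c : ℚ) • I.coeff :=
  rfl
@[simp] theorem rhs_smul (c : ℚ≥0) (I : ChvatalIneq n k) : (c • I).rhs = c * I.rhs := rfl

variable (x : Fin n → ℝ)

@[simp]
theorem excess_add (I J : ChvatalIneq n k) (u : Fin k → ℝ) :
    (I + J).excess x u = I.excess x u + J.excess x u := by
  simp only [excess, ChvatalTree.eval, Rat.cast_one, one_mul, coeff_add, Pi.add_apply,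
    Rat.cast_add, add_mul, Finset.sum_add_distrib, rhs_add]
  ring

@[simp]
theorem excess_smul (c : ℚ≥0) (I : ChvatalIneq n k) (u : Fin k → ℝ) :
    (c • I).excess x u = (c : ℚ) * I.excess x u := by
  simp only [excess, lhs_smul, ChvatalTree.eval, Rat.cast_nnratCast, coeff_smul, Pi.smul_apply,
    smul_eq_mul, Rat.cast_mul, mul_assoc, ← Finset.mul_sum, rhs_smul]
  ring

theorem excess_ceil_intCast (I : ChvatalIneq n k) (hI : ∀ j, ∃ m : ℤ, I.coeff j = m)
    (v : Fin k → ℤ) :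
    I.ceil.excess x (fun j => v j) = ⌈I.excess x (fun j => v j)⌉ := by
  choose m hm using hI
  have hsum : ∑ j, (I.coeff j : ℝ) * v j = ((∑ j, m j * v j : ℤ) : ℝ) := by
    simp [hm]
  simp only [excess, ceil, ChvatalTree.eval, hsum, add_sub_right_comm _ ((_ : ℤ) : ℝ),
    Int.ceil_add_intCast]
  simp [sub_eq_add_neg]

theorem excess_snoc (I : ChvatalIneq n (k + 1)) (u : Fin k → ℝ) (t : ℝ) :
    I.excess x (Fin.snoc u t) = I.dropLast.excess x u + I.lastCoeff * t := by
  simp only [excess, dropLast, lastCoeff, Fin.sum_univ_castSucc, Fin.snoc_castSucc,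
    Fin.snoc_last, Fin.init]
  ring

theorem excess_comap (a b : Fin k → ℚ) (I : ChvatalIneq n k) (u : Fin k → ℝ) :
    (I.comap a b).excess x u = I.excess x (fun j => a j * u j + b j) := by
  simp only [excess, comap, mul_add, Finset.sum_add_distrib]
  push_cast
  simp only [mul_assoc, mul_left_comm (a _ : ℝ)]
  ring

/-- Combines a lower bound `I` and an upper bound `J` on the last variable, `B` rounding the
lower bound. For such `I` and `J` the multipliers are nonnegative, so `toNNRat` does not
change them. -/
def fmPair (B : ChvatalIneq n k → ChvatalIneq n k) (I J : ChvatalIneq n (k + 1)) :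
    ChvatalIneq n k :=
  J.lastCoeff.toNNRat • B ((-I.lastCoeff)⁻¹.toNNRat • I.dropLast) + J.dropLast

def fmElim (B : ChvatalIneq n k → ChvatalIneq n k) (L : List (ChvatalIneq n (k + 1))) :
    List (ChvatalIneq n k) :=
  (L.filter (·.lastCoeff = 0)).map dropLast ++
    (L.filter (·.lastCoeff < 0)).flatMap fun I => (L.filter (0 < ·.lastCoeff)).map (fmPair B I)

theorem forall_mem_fmElim {B : ChvatalIneq n k → ChvatalIneq n k}
    {L : List (ChvatalIneq n (k + 1))} {P : ChvatalIneq n k → Prop} :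
    (∀ I' ∈ fmElim B L, P I') ↔ (∀ I ∈ L, I.lastCoeff = 0 → P I.dropLast) ∧
      ∀ I ∈ L, I.lastCoeff < 0 → ∀ J ∈ L, 0 < J.lastCoeff → P (fmPair B I J) := by
  simp only [fmElim, List.forall_mem_append, List.forall_mem_map, List.forall_mem_flatMap,
    List.forall_mem_filter, decide_eq_true_eq]

theorem excess_fmPair (x : Fin n → ℝ) (B : ChvatalIneq n k → ChvatalIneq n k)
    (I : ChvatalIneq n (k + 1)) {J : ChvatalIneq n (k + 1)} (hJ : 0 < J.lastCoeff)
    (u : Fin k → ℝ) :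
    (fmPair B I J).excess x u = J.lastCoeff *
      (B ((-I.lastCoeff)⁻¹.toNNRat • I.dropLast)).excess x u + J.dropLast.excess x u := by
  simp [fmPair, Rat.coe_toNNRat _ hJ.le]

theorem exists_forall_excess_snoc_iff {α : Type*} [LinearOrder α] [Nonempty α]
    {e : α → ℝ} {ρ σ : ℝ → α} (hρ : GaloisConnection ρ e) (hσ : GaloisConnection e σ)
    (B : ChvatalIneq n k → ChvatalIneq n k) (L : List (ChvatalIneq n (k + 1)))
    (x : Fin n → ℝ) (u : Fin k → ℝ)
    (hB : ∀ I ∈ L, I.lastCoeff < 0 →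
      (B ((-I.lastCoeff)⁻¹.toNNRat • I.dropLast)).excess x u =
        e (ρ (((-I.lastCoeff)⁻¹.toNNRat • I.dropLast).excess x u))) :
    (∃ w, ∀ I ∈ L, I.excess x (Fin.snoc u (e w)) ≤ 0) ↔ ∀ I' ∈ fmElim B L, I'.excess x u ≤ 0 := by
  simp only [excess_snoc]
  refine (exists_forall_add_mul_nonpos_iff hρ hσ L.finite_toSet _ _).trans ?_
  simp only [forall_mem_fmElim, Set.mem_ofPred_eq, Rat.cast_eq_zero, Rat.cast_lt_zero,
    Rat.cast_pos]
  refine and_congr Iff.rfl (forall₃_congr fun I hI hIneg => forall₃_congr fun J _ hJpos => ?_)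
  rw [excess_fmPair x B I hJpos, hB I hI hIneg, excess_smul,
    Rat.coe_toNNRat _ (inv_nonneg.mpr (neg_nonneg.mpr hIneg.le))]
  push_cast
  rw [inv_mul_eq_div]

theorem exists_real_forall_excess_snoc_iff (L : List (ChvatalIneq n (k + 1)))
    (x : Fin n → ℝ) (u : Fin k → ℝ) :
    (∃ t : ℝ, ∀ I ∈ L, I.excess x (Fin.snoc u t) ≤ 0) ↔
      ∀ I' ∈ fmElim id L, I'.excess x u ≤ 0 :=
  exists_forall_excess_snoc_iff .id .id id L x u fun _ _ _ => rfl

theorem exists_int_forall_excess_snoc_iff (L : List (ChvatalIneq n (k + 1)))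
    (hL : ∀ I ∈ L, I.lastCoeff < 0 → ∀ j : Fin k, ∃ m : ℤ, I.coeff j.castSucc / I.lastCoeff = m)
    (x : Fin n → ℝ) (v : Fin k → ℤ) :
    (∃ w : ℤ, ∀ I ∈ L, I.excess x (Fin.snoc (fun j => (v j : ℝ)) (w : ℝ)) ≤ 0) ↔
      ∀ I' ∈ fmElim ceil L, I'.excess x (fun j => v j) ≤ 0 := by
  refine exists_forall_excess_snoc_iff Int.gc_ceil_coe Int.gc_coe_floor ceil L x _ ?_
  intro I hI hneg
  refine excess_ceil_intCast x _ (fun j => ?_) v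
  obtain ⟨m, hm⟩ := hL I hI hneg j
  refine ⟨-m, ?_⟩
  rw [coeff_smul, Rat.coe_toNNRat _ (inv_nonneg.mpr (neg_nonneg.mpr hneg.le))]
  simp [dropLast, Fin.init, ← hm, div_eq_inv_mul, inv_neg]

theorem exists_forall_excess_iff_exists_real (p : ℕ) (L : List (ChvatalIneq n (k + p))) :
    ∃ L' : List (ChvatalIneq n k), ∀ x u,
      (∃ y : Fin p → ℝ, ∀ I ∈ L, I.excess x (Fin.append u y) ≤ 0) ↔
        ∀ I ∈ L', I.excess x u ≤ 0 := by
  induction p with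
  | zero => exact ⟨L, fun x u => by simp [Fin.append_right_nil]⟩
  | succ p ih =>
    obtain ⟨L', hL'⟩ := ih (fmElim id L)
    refine ⟨L', fun x u => ?_⟩
    have split_last : ∀ P : (Fin (p + 1) → ℝ) → Prop, (∃ y, P y) ↔ ∃ y t, P (Fin.snoc y t) :=
      fun P => ⟨fun ⟨y, hy⟩ => ⟨Fin.init y, y (Fin.last p), by rwa [Fin.snoc_init_self]⟩,
        fun ⟨_, _, h⟩ => ⟨_, h⟩⟩
    rw [← hL', split_last]
    simp only [Fin.append_snoc]
    exact exists_congr fun y => exists_real_forall_excess_snoc_iff L x (Fin.append u y)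

def residueSubst (M : ℕ) (t : Fin k → Fin M) (I : ChvatalIneq n (k + 1)) :
    ChvatalIneq n (k + 1) :=
  I.comap (Fin.snoc (fun _ => (M : ℚ)) 1) (Fin.snoc (fun j => ((t j : ℕ) : ℚ)) 0)

theorem excess_residueSubst (x : Fin n → ℝ) (M : ℕ) (t : Fin k → Fin M)
    (I : ChvatalIneq n (k + 1)) (v : Fin k → ℤ) (w : ℤ) :
    (residueSubst M t I).excess x (Fin.snoc (fun j => (v j : ℝ)) (w : ℝ)) =
      I.excess x (fun j => ((Fin.snoc (fun j => M * v j + t j) w : Fin (k + 1) → ℤ) j : ℝ)) := by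
  rw [residueSubst, excess_comap]
  congr 1
  funext j
  refine Fin.lastCases ?_ (fun j => ?_) j <;> simp

theorem setOf_exists_int_eq_iUnion (L : List (ChvatalIneq n (k + 1))) {M : ℕ} (hM : 0 < M)
    (hL : ∀ I ∈ L, ∀ j : Fin k, ∃ m : ℤ, M * (I.coeff j.castSucc / I.lastCoeff) = m) :
    {x | ∃ z : Fin (k + 1) → ℤ, ∀ I ∈ L, I.excess x (fun j => z j) ≤ 0} =
      ⋃ t : Fin k → Fin M, {x | ∃ v : Fin k → ℤ,
        ∀ I ∈ fmElim ceil (L.map (residueSubst M t)), I.excess x (fun j => v j) ≤ 0} := by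
  ext x
  simp only [Set.mem_ofPred_eq, Set.mem_iUnion, exists_int_iff_exists_residue hM]
  refine exists_congr fun t => exists_congr fun v => ?_
  rw [← exists_int_forall_excess_snoc_iff]
  · simp only [List.forall_mem_map, excess_residueSubst]
  · simp only [List.forall_mem_map]
    intro I hI _ j
    simpa [residueSubst, comap, lastCoeff, mul_div_assoc] using hL I hI j

theorem isDMIC_setOf_exists_int (L : List (ChvatalIneq n k)) :
    IsDMIC {x | ∃ z : Fin k → ℤ, ∀ I ∈ L, I.excess x (fun j => z j) ≤ 0} := by
  induction k with
  | zero =>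
    refine ⟨1, L.length, fun _ i => L[i].lhs, fun _ i => L[i].rhs, fun _ i => L[i].valid, ?_⟩
    ext x
    simp [excess, List.forall_mem_iff_getElem, Fin.forall_iff]
  | succ k ih =>
    obtain ⟨M, hM, hMint⟩ := exists_pos_nat_mul_eq_int
      (L.flatMap fun I => List.ofFn fun j : Fin k => I.coeff j.castSucc / I.lastCoeff)
    rw [setOf_exists_int_eq_iUnion L hM fun I hI j =>
      hMint _ (List.mem_flatMap.mpr ⟨I, hI, List.mem_ofFn.mpr ⟨j, rfl⟩⟩)]
    exact IsDMIC.iUnion fun _ => ih _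

def milpIneq {m p q : ℕ} (A : Matrix (Fin m) (Fin n) ℚ) (B : Matrix (Fin m) (Fin p) ℚ)
    (C : Matrix (Fin m) (Fin q) ℚ) (d : Fin m → ℚ) (i : Fin m) : ChvatalIneq n (q + p) :=
  ⟨.leaf (fun j => -A i j) 0, trivial, Fin.append (fun j => -C i j) (fun j => -B i j), -d i⟩

theorem excess_milpIneq_nonpos_iff {m p q : ℕ} (A : Matrix (Fin m) (Fin n) ℚ)
    (B : Matrix (Fin m) (Fin p) ℚ) (C : Matrix (Fin m) (Fin q) ℚ) (d : Fin m → ℚ) (i : Fin m)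
    (x : Fin n → ℝ) (y : Fin p → ℝ) (z : Fin q → ℤ) :
    (milpIneq A B C d i).excess x (Fin.append (fun j => z j) y) ≤ 0 ↔
      (d i : ℝ) ≤ (∑ j, (A i j : ℝ) * x j) + (∑ j, (B i j : ℝ) * y j)
        + (∑ j, (C i j : ℝ) * (z j : ℝ)) := by
  simp only [excess, milpIneq, ChvatalTree.eval, Fin.sum_univ_add, Fin.append_left,
    Fin.append_right]
  push_cast
  simp only [neg_mul, Finset.sum_neg_distrib]
  constructor <;> intro h <;> linarith

end ChvatalIneq

/-- Every MILP-representable set is a DMIC set: a finite union of sets,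
each described by finitely many affine Chvátal inequalities in `x ∈ ℝ^n`. -/
theorem milp_representable_is_dmic {n : ℕ} (S : Set (Fin n → ℝ))
    (hS : MILPRepresentable S) :
    ∃ (t m : ℕ) (f : Fin t → Fin m → ChvatalTree n) (b : Fin t → Fin m → ℝ),
      (∀ j i, (f j i).Valid) ∧
      S = ⋃ j : Fin t, {x | ∀ i : Fin m, (f j i).eval x ≤ b j i} := by
  obtain ⟨m, p, q, A, B, C, d, rfl⟩ := hS
  obtain ⟨L, hL⟩ := ChvatalIneq.exists_forall_excess_iff_exists_real p
    (List.ofFn (ChvatalIneq.milpIneq A B C d))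
  show IsDMIC _
  convert ChvatalIneq.isDMIC_setOf_exists_int L using 1
  ext x
  simp only [Set.mem_ofPred_eq, ← hL, List.forall_mem_ofFn_iff,
    ChvatalIneq.excess_milpIneq_nonpos_iff]
  exact exists_comm
end

section
/- The set E := {(λ, 2λ) : λ ∈ ℤ, λ ≥ 0} ∪ {(2λ, λ) : λ ∈ ℤ, λ ≥ 0} ⊆ ℝ² is not MILP-representable. -/
open Finset Matrix

theorem Finset.exists_forall_le_forall_ge {α : Type*} [LinearOrder α] [Nonempty α]
    (s t : Finset α) (H : ∀ x ∈ s, ∀ y ∈ t, x ≤ y) :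
    ∃ b, (∀ x ∈ s, x ≤ b) ∧ ∀ y ∈ t, b ≤ y := by
  by_cases hs : s.Nonempty
  · exact ⟨s.max' hs, fun x hx => s.le_max' x hx, H _ (s.max'_mem hs)⟩
  by_cases ht : t.Nonempty
  · exact ⟨t.min' ht, fun x hx => H x hx _ (t.min'_mem ht), fun y hy => t.min'_le y hy⟩
  obtain ⟨b⟩ := ‹Nonempty α›
  exact ⟨b, by simp_all [Finset.not_nonempty_iff_eq_empty]⟩

section FourierMotzkin

variable {ι 𝕜 : Type*} [Field 𝕜] [LinearOrder 𝕜]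

-- Indices that do not give a Fourier–Motzkin combination give the trivial row `0`.
def fourierMotzkin {M : Type*} [AddCommGroup M] [Module 𝕜 M] (c : ι → 𝕜) (r : ι → M) :
    ι ⊕ ι × ι → M
  | .inl i => if c i = 0 then r i else 0
  | .inr (i, j) => if 0 < c i ∧ c j < 0 then c i • r j - c j • r i else 0

theorem exists_forall_nonneg_add_mul_iff [IsStrictOrderedRing 𝕜] [Finite ι] (a c : ι → 𝕜) :
    (∃ t, ∀ i, 0 ≤ a i + c i * t) ↔ ∀ J, 0 ≤ fourierMotzkin c a J := by
  constructor
  · rintro ⟨t, ht⟩ (i | ⟨i, j⟩) <;> simp only [fourierMotzkin, smul_eq_mul] <;> split_ifs with h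
    · simpa [h] using ht i
    · rfl
    · nlinarith [mul_nonneg h.1.le (ht j), mul_nonneg (neg_nonneg.2 h.2.le) (ht i)]
    · rfl
  · intro h
    have := Fintype.ofFinite ι
    classical
    -- `t` must lie above the roots `-a i / c i` with `c i > 0` and below those with `c i < 0`.
    obtain ⟨t, hlow, hupp⟩ := Finset.exists_forall_le_forall_ge
      ((univ.filter (0 < c ·)).image fun i => -a i / c i)
      ((univ.filter (c · < 0)).image fun i => -a i / c i) (by
        simp only [mem_image, mem_filter, mem_univ, true_and]
        rintro _ ⟨i, hi, rfl⟩ _ ⟨j, hj, rfl⟩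
        have hij := h (.inr (i, j))
        simp only [fourierMotzkin, if_pos (And.intro hi hj), smul_eq_mul] at hij
        rw [div_le_iff₀ hi, div_mul_eq_mul_div, le_div_iff_of_neg hj]
        linarith)
    refine ⟨t, fun i => ?_⟩
    rcases lt_trichotomy (c i) 0 with hi | hi | hi
    · have := hupp _ (mem_image_of_mem _ (by simpa using hi))
      rw [le_div_iff_of_neg hi] at this
      linarith
    · have := h (.inl i)
      simp only [fourierMotzkin, if_pos hi] at this
      simp [hi, this]
    · have := hlow _ (mem_image_of_mem _ (by simpa using hi))
      rw [div_le_iff₀ hi] at this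
      linarith

theorem fourierMotzkin_dotProduct_sub {κ : Type*} [Fintype κ] (c : ι → 𝕜) (r : ι → κ → 𝕜)
    (d : ι → 𝕜) (v : κ → 𝕜) (J : ι ⊕ ι × ι) :
    fourierMotzkin c r J ⬝ᵥ v - fourierMotzkin c d J =
      fourierMotzkin c (fun i => r i ⬝ᵥ v - d i) J := by
  rcases J with i | ⟨i, j⟩ <;> simp only [fourierMotzkin] <;> split_ifs <;>
    simp only [sub_dotProduct, smul_dotProduct, smul_eq_mul, zero_dotProduct] <;> ring

theorem fourierMotzkin_apply_mem {κ : Type*} (K : Subring 𝕜) {c : ι → 𝕜} {r : ι → κ → 𝕜}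
    (hc : ∀ i, c i ∈ K) (hr : ∀ i a, r i a ∈ K) (J : ι ⊕ ι × ι) (a : κ) :
    fourierMotzkin c r J a ∈ K := by
  rcases J with i | ⟨i, j⟩ <;> simp only [fourierMotzkin] <;> split_ifs
  · exact hr i a
  · exact K.zero_mem
  · exact K.sub_mem (K.mul_mem (hc i) (hr j a)) (K.mul_mem (hc j) (hr i a))
  · exact K.zero_mem

end FourierMotzkin

theorem Matrix.dotProduct_update {κ R : Type*} [Fintype κ] [DecidableEq κ] [CommRing R]
    (u v : κ → R) (j : κ) (t : R) :
    u ⬝ᵥ Function.update v j t = Function.update u j 0 ⬝ᵥ v + u j * t := by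
  have hv : Function.update v j t = v + Pi.single j (t - v j) := by
    ext a; by_cases h : a = j <;> simp [h]
  have hu : Function.update u j 0 = u - Pi.single j (u j) := by
    ext a; by_cases h : a = j <;> simp [h]
  rw [hv, hu, dotProduct_add, dotProduct_single, sub_dotProduct, single_dotProduct]
  ring

theorem Rat.exists_pos_nat_forall_mul_eq_intCast {κ : Type*} [Fintype κ] (q : κ → ℚ) :
    ∃ N : ℕ, 0 < N ∧ ∀ a, ∃ m : ℤ, (N : ℚ) * q a = m := by
  classical
  refine ⟨∏ a, (q a).den, Finset.prod_pos fun a _ => (q a).den_pos,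
    fun a => ⟨(q a).num * ∏ b ∈ univ.erase a, (q b).den, ?_⟩⟩
  rw [← Finset.mul_prod_erase univ _ (mem_univ a)]
  push_cast
  rw [← Rat.den_mul_eq_num]
  ring

theorem exists_lt_and_le_of_forall_le {ι α : Type*} [Finite ι] [LinearOrder α]
    [LocallyFiniteOrder α] (g : ℕ → ι → α) (b : ι → α) (hb : ∀ n i, b i ≤ g n i) :
    ∃ k l, k < l ∧ g k ≤ g l :=
  (Set.IsPWO.pi fun i => (BddBelow.isWF (s := Set.Ici (b i)) ⟨b i, fun _ => id⟩).isPWO).exists_lt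
    fun n i _ => hb n i

def IsPolyhedronOver (K : Subring ℝ) {κ : Type*} [Fintype κ] (P : Set (κ → ℝ)) : Prop :=
  ∃ (ι : Type) (_ : Fintype ι) (u : ι → κ → ℝ) (d : ι → ℝ),
    (∀ i a, u i a ∈ K) ∧ P = {v | ∀ i, d i ≤ u i ⬝ᵥ v}

namespace IsPolyhedronOver

variable {K : Subring ℝ} {κ : Type*} [Fintype κ]

theorem exists_update_mem [DecidableEq κ] {P : Set (κ → ℝ)} (hP : IsPolyhedronOver K P)
    (j : κ) : IsPolyhedronOver K {v | ∃ t, Function.update v j t ∈ P} := by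
  obtain ⟨ι, _, u, d, hu, rfl⟩ := hP
  let r i := Function.update (u i) j 0
  have hr : ∀ i a, r i a ∈ K := fun i a => by
    by_cases h : a = j <;> simp [r, h, hu i a, K.zero_mem]
  refine ⟨ι ⊕ ι × ι, inferInstance, fourierMotzkin (u · j) r, fourierMotzkin (u · j) d,
    fourierMotzkin_apply_mem K (hu · j) hr, ?_⟩
  ext v
  have key := exists_forall_nonneg_add_mul_iff (fun i => r i ⬝ᵥ v - d i) (u · j)
  simp only [← fourierMotzkin_dotProduct_sub, sub_nonneg, sub_add_eq_add_sub] at key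
  simpa only [Set.mem_ofPred_eq, dotProduct_update] using key

theorem exists_mem_forall_notMem_eq [DecidableEq κ] {P : Set (κ → ℝ)}
    (hP : IsPolyhedronOver K P) (s : Finset κ) :
    IsPolyhedronOver K {v | ∃ y ∈ P, ∀ a ∉ s, y a = v a} := by
  induction s using Finset.induction_on with
  | empty => simpa [← funext_iff] using hP
  | insert j s hj ih =>
    convert ih.exists_update_mem j using 1
    ext v
    constructor
    · rintro ⟨y, hy, hyv⟩
      refine ⟨y j, y, hy, fun a ha => ?_⟩
      by_cases h : a = j
      · simp [h]
      · simp [h, hyv a (by simp [h, ha])]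
    · rintro ⟨t, y, hy, hyv⟩
      refine ⟨y, hy, fun a ha => ?_⟩
      rw [Finset.mem_insert, not_or] at ha
      simp [hyv a ha.2, ha.1]

theorem preimage_sumElim_zero {σ : Type*} [Fintype σ] {P : Set (κ ⊕ σ → ℝ)}
    (hP : IsPolyhedronOver K P) : IsPolyhedronOver K ((fun v => Sum.elim v 0) ⁻¹' P) := by
  obtain ⟨ι, _, u, d, hu, rfl⟩ := hP
  refine ⟨ι, inferInstance, fun i => u i ∘ Sum.inl, d, fun i a => hu i _, ?_⟩
  ext v
  have hrow i : u i ⬝ᵥ Sum.elim v 0 = (u i ∘ Sum.inl) ⬝ᵥ v := by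
    rw [← Sum.elim_comp_inl_inr (u i), sumElim_dotProduct_sumElim, dotProduct_zero, add_zero,
      Sum.elim_comp_inl]
  simp only [Set.mem_preimage, Set.mem_ofPred_eq, hrow]

theorem exists_sumElim_mem {σ : Type*} [Fintype σ] {P : Set (κ ⊕ σ → ℝ)}
    (hP : IsPolyhedronOver K P) : IsPolyhedronOver K {v | ∃ y, Sum.elim v y ∈ P} := by
  classical
  convert (hP.exists_mem_forall_notMem_eq (univ.map .inr)).preimage_sumElim_zero using 1
  ext v
  simp only [Set.mem_ofPred_eq, Set.mem_preimage, mem_map, mem_univ, true_and, not_exists,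
    Sum.forall, Sum.elim_inl, Sum.elim_inr]
  constructor
  · rintro ⟨y, hy⟩
    exact ⟨_, hy, fun a _ => rfl, fun b h => (h b rfl).elim⟩
  · rintro ⟨w, hw, hwv, -⟩
    refine ⟨w ∘ Sum.inr, ?_⟩
    convert hw
    ext (a | b)
    · exact (hwv a fun _ h => Sum.inr_ne_inl h).symm
    · rfl

theorem of_ratCast {P : Set (κ → ℝ)} (hP : IsPolyhedronOver (Rat.castHom ℝ).range P) :
    IsPolyhedronOver (Int.castRingHom ℝ).range P := by
  obtain ⟨ι, _, u, d, hu, rfl⟩ := hP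
  choose q hq using hu
  choose N hN hNq using fun i => Rat.exists_pos_nat_forall_mul_eq_intCast (q i)
  refine ⟨ι, inferInstance, fun i => (N i : ℝ) • u i, fun i => N i * d i, fun i a => ?_, ?_⟩
  · obtain ⟨m, hm⟩ := hNq i a
    exact ⟨m, by simpa [← hq] using congrArg ((↑) : ℚ → ℝ) hm.symm⟩
  · ext v
    simp only [Set.mem_ofPred_eq, smul_dotProduct, smul_eq_mul]
    exact forall_congr' fun i => (mul_le_mul_iff_right₀ (by exact_mod_cast hN i)).symm

theorem exists_lt_add_sub_mem {P : Set (κ → ℝ)}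
    (hP : IsPolyhedronOver (Int.castRingHom ℝ).range P) (w : ℕ → κ → ℤ)
    (hw : ∀ n, (Int.cast ∘ w n : κ → ℝ) ∈ P) :
    ∃ k l, k < l ∧ ∀ v ∈ P, v + (Int.cast ∘ w l - Int.cast ∘ w k) ∈ P := by
  obtain ⟨ι, _, u, d, hu, rfl⟩ := hP
  have hint n i : u i ⬝ᵥ (Int.cast ∘ w n) ∈ (Int.castRingHom ℝ).range :=
    Subring.sum_mem _ fun a _ => Subring.mul_mem _ (hu i a) (intCast_mem _ _)
  choose g hg using hint
  simp only [eq_intCast] at hg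
  obtain ⟨k, l, hkl, hle⟩ := exists_lt_and_le_of_forall_le g (fun i => ⌈d i⌉)
    fun n i => Int.ceil_le.2 (hg n i ▸ hw n i)
  refine ⟨k, l, hkl, fun v hv i => ?_⟩
  have hkl_i : (g k i : ℝ) ≤ g l i := by exact_mod_cast hle i
  calc d i ≤ u i ⬝ᵥ v := hv i
    _ ≤ u i ⬝ᵥ v + (g l i - g k i) := by linarith
    _ = u i ⬝ᵥ (v + (Int.cast ∘ w l - Int.cast ∘ w k)) := by
      rw [dotProduct_add, dotProduct_sub, hg, hg]

end IsPolyhedronOver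

namespace MILPRepresentable

variable {n : ℕ} {S : Set (Fin n → ℝ)}

theorem exists_isPolyhedronOver (hS : MILPRepresentable S) :
    ∃ (q : ℕ) (Q : Set (Fin n ⊕ Fin q → ℝ)), IsPolyhedronOver (Int.castRingHom ℝ).range Q ∧
      S = {x | ∃ z : Fin q → ℤ, Sum.elim x (Int.cast ∘ z) ∈ Q} := by
  obtain ⟨m, p, q, A, B, C, d, rfl⟩ := hS
  let row (i : Fin m) : (Fin n ⊕ Fin q) ⊕ Fin p → ℝ :=
    Sum.elim (Sum.elim (fun j => (A i j : ℝ)) (fun j => (C i j : ℝ))) (fun j => (B i j : ℝ))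
  have hP : IsPolyhedronOver (Rat.castHom ℝ).range {w | ∀ i, (d i : ℝ) ≤ row i ⬝ᵥ w} :=
    ⟨Fin m, inferInstance, row, fun i => d i, by rintro i ((j | j) | j) <;> exact ⟨_, rfl⟩, rfl⟩
  refine ⟨q, _, hP.exists_sumElim_mem.of_ratCast, ?_⟩
  ext x
  simp only [Set.mem_ofPred_eq, row, sumElim_dotProduct_sumElim]
  rw [exists_comm]
  simp only [dotProduct, Function.comp_apply, add_right_comm]

theorem exists_lt_add_sub_mem (hS : MILPRepresentable S) (x : ℕ → Fin n → ℤ)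
    (hx : ∀ k, (Int.cast ∘ x k : Fin n → ℝ) ∈ S) :
    ∃ k l, k < l ∧ ∀ v ∈ S, v + (Int.cast ∘ x l - Int.cast ∘ x k) ∈ S := by
  obtain ⟨q, Q, hQ, rfl⟩ := hS.exists_isPolyhedronOver
  choose z hz using hx
  obtain ⟨k, l, hkl, hrec⟩ := hQ.exists_lt_add_sub_mem (fun k => Sum.elim (x k) (z k))
    fun k => by simpa [Sum.comp_elim] using hz k
  refine ⟨k, l, hkl, fun v ⟨zv, hv⟩ => ⟨zv + (z l - z k), ?_⟩⟩
  convert hrec _ hv using 1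
  ext (a | a) <;> simp

end MILPRepresentable

/-- The set `E = {(λ,2λ) : λ ∈ ℤ₊} ∪ {(2λ,λ) : λ ∈ ℤ₊} ⊆ ℝ²`
is not MILP-representable. -/
theorem E_not_milp_representable :
    ¬ MILPRepresentable {x : Fin 2 → ℝ |
        (∃ lam : ℤ, 0 ≤ lam ∧ x 0 = (lam : ℝ) ∧ x 1 = 2 * (lam : ℝ)) ∨
        (∃ lam : ℤ, 0 ≤ lam ∧ x 0 = 2 * (lam : ℝ) ∧ x 1 = (lam : ℝ))} := by
  intro hE
  obtain ⟨k, l, hkl, hrec⟩ := hE.exists_lt_add_sub_mem (fun k => ![k, 2 * k])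
    fun k => Or.inl ⟨k, by simp⟩
  have hlk : (k : ℝ) + 1 ≤ l := by exact_mod_cast hkl
  rcases hrec ![2, 1] (Or.inr ⟨1, by norm_num⟩) with ⟨lam, -, h0, h1⟩ | ⟨lam, -, h0, h1⟩ <;>
    simp at h0 h1 <;> linarith
end

section
/- For every affine Chvátal function f : ℝ^n → ℝ represented by a binary tree T, one of the following holds. Case 1: cc(T) = 0, and then f is an affine function with rational coefficients. Case 2: there exist a rational γ > 0 and affine Chvátal functions g₁, g₂ : ℝ^n → ℝ with f = γ·⌈g₁⌉ + g₂ (pointwise), such that g₁ and g₂ admit binary tree representations T₁ and T₂ respectively with cc(T₁) + cc(T₂) + 1 ≤ cc(T). -/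
/-!
Induct on the tree. If no edge is a ceiling, nonnegative rational combinations of rational
affine functions stay rational affine. Otherwise some subtree is a ceiling `⌈t⌉ = 1·⌈t⌉ + 0`, and
this shape survives the operations above it: scaling by `a > 0` scales `γ` and the remainder, a
sibling is absorbed into the remainder, and a weight `0` deletes a subtree containing a ceiling,
so that the whole function can be written as `1·⌈0⌉ + f` within the ceiling budget.
-/

namespace ChvatalTree

variable {n : ℕ}

def IsRatAffine (f : (Fin n → ℝ) → ℝ) : Prop :=
  ∃ (a : Fin n → ℚ) (c : ℚ), ∀ x, f x = (∑ j, (a j : ℝ) * x j) + (c : ℝ)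

theorem IsRatAffine.const_mul {f : (Fin n → ℝ) → ℝ} (hf : IsRatAffine f) (q : ℚ) :
    IsRatAffine fun x => (q : ℝ) * f x := by
  obtain ⟨a, c, hf⟩ := hf
  refine ⟨q • a, q * c, fun x => ?_⟩
  simp only [hf, Pi.smul_apply, smul_eq_mul, Rat.cast_mul, mul_add, Finset.mul_sum, mul_assoc]

theorem IsRatAffine.add {f g : (Fin n → ℝ) → ℝ} (hf : IsRatAffine f) (hg : IsRatAffine g) :
    IsRatAffine fun x => f x + g x := by
  obtain ⟨a, c, hf⟩ := hf
  obtain ⟨b, d, hg⟩ := hg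
  refine ⟨a + b, c + d, fun x => ?_⟩
  simp only [hf, hg, Pi.add_apply, Rat.cast_add, add_mul, Finset.sum_add_distrib]
  ring

theorem isRatAffine_eval_of_cc_eq_zero {T : ChvatalTree n} (h : T.cc = 0) :
    IsRatAffine T.eval := by
  induction T with
  | leaf a c => exact ⟨a, c, fun _ => rfl⟩
  | ceil t _ => exact absurd h (Nat.succ_ne_zero _)
  | scale a t ih => exact (ih h).const_mul a
  | comb a b t₁ t₂ ih₁ ih₂ =>
    obtain ⟨h₁, h₂⟩ := Nat.add_eq_zero_iff.mp h
    exact ((ih₁ h₁).const_mul a).add ((ih₂ h₂).const_mul b)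

def HasCeilDecomposition (k : ℕ) (f : (Fin n → ℝ) → ℝ) : Prop :=
  ∃ (γ : ℚ) (T₁ T₂ : ChvatalTree n), 0 < γ ∧ T₁.Valid ∧ T₂.Valid ∧ T₁.cc + T₂.cc + 1 ≤ k ∧
    ∀ x, f x = (γ : ℝ) * (⌈T₁.eval x⌉ : ℝ) + T₂.eval x

namespace HasCeilDecomposition

variable {k : ℕ} {f : (Fin n → ℝ) → ℝ}

theorem one_le (h : HasCeilDecomposition k f) : 1 ≤ k := by
  obtain ⟨_, _, _, _, _, _, hk, _⟩ := h
  omega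

theorem of_valid {T : ChvatalTree n} (hT : T.Valid) (hk : T.cc < k) :
    HasCeilDecomposition k T.eval :=
  ⟨1, leaf 0 0, T, one_pos, trivial, hT, by simpa [cc] using hk, fun x => by simp [eval]⟩

theorem ceil {T : ChvatalTree n} (hT : T.Valid) :
    HasCeilDecomposition (T.cc + 1) fun x => (⌈T.eval x⌉ : ℝ) :=
  ⟨1, T, leaf 0 0, one_pos, hT, trivial, by simp [cc], fun x => by simp [eval]⟩

theorem const_mul (h : HasCeilDecomposition k f) {a : ℚ} (ha : 0 ≤ a) :
    HasCeilDecomposition k fun x => (a : ℝ) * f x := by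
  rcases ha.eq_or_lt with rfl | ha
  · simpa [eval] using of_valid (T := leaf 0 0) trivial h.one_le
  obtain ⟨γ, T₁, T₂, hγ, hT₁, hT₂, hk, hf⟩ := h
  refine ⟨a * γ, T₁, scale a T₂, mul_pos ha hγ, hT₁, ⟨ha.le, hT₂⟩, hk, fun x => ?_⟩
  simp only [hf, eval, Rat.cast_mul]
  ring

theorem add_const_mul_eval (h : HasCeilDecomposition k f) {b : ℚ} (hb : 0 ≤ b)
    {S : ChvatalTree n} (hS : S.Valid) :
    HasCeilDecomposition (k + S.cc) fun x => f x + (b : ℝ) * S.eval x := by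
  obtain ⟨γ, T₁, T₂, hγ, hT₁, hT₂, hk, hf⟩ := h
  refine ⟨γ, T₁, comb 1 b T₂ S, hγ, hT₁, ⟨zero_le_one, hb, hT₂, hS⟩, by simp only [cc]; omega,
    fun x => ?_⟩
  simp only [hf, eval, Rat.cast_one, one_mul]
  ring

end HasCeilDecomposition

theorem hasCeilDecomposition_of_cc_pos {T : ChvatalTree n} (hT : T.Valid) (h : 0 < T.cc) :
    HasCeilDecomposition T.cc T.eval := by
  induction T with
  | leaf a c => exact absurd h (lt_irrefl 0)
  | ceil t _ => exact HasCeilDecomposition.ceil hT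
  | scale a t ih => exact (ih hT.2 h).const_mul hT.1
  | comb a b t₁ t₂ ih₁ ih₂ =>
    obtain ⟨ha, hb, hT₁, hT₂⟩ := hT
    rcases Nat.eq_zero_or_pos t₁.cc with h₁ | h₁
    · have h₂ : 0 < t₂.cc := by simpa [cc, h₁] using h
      have := ((ih₂ hT₂ h₂).const_mul hb).add_const_mul_eval ha hT₁
      simp only [cc, h₁, zero_add, add_zero] at this ⊢
      simpa only [eval, add_comm] using this
    · exact ((ih₁ hT₁ h₁).const_mul ha).add_const_mul_eval hb hT₂

end ChvatalTree

/-- For every affine Chvátal function given by a binary tree `T`, either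
`cc(T) = 0` and the function is affine with rational coefficients, or the function equals
`γ⌈g₁⌉ + g₂` for a rational `γ > 0` and affine Chvátal functions `g₁, g₂` admitting tree
representations `T₁, T₂` with `cc(T₁) + cc(T₂) + 1 ≤ cc(T)`. -/
theorem chvatal_tree_case_analysis {n : ℕ} (T : ChvatalTree n) (hT : T.Valid) :
    (T.cc = 0 ∧ ∃ (a : Fin n → ℚ) (c : ℚ),
        ∀ x, T.eval x = (∑ j, (a j : ℝ) * x j) + (c : ℝ)) ∨
    (∃ (γ : ℚ) (T₁ T₂ : ChvatalTree n), 0 < γ ∧ T₁.Valid ∧ T₂.Valid ∧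
        T₁.cc + T₂.cc + 1 ≤ T.cc ∧
        ∀ x, T.eval x = (γ : ℝ) * (⌈T₁.eval x⌉ : ℝ) + T₂.eval x) := by
  rcases Nat.eq_zero_or_pos T.cc with h | h
  · exact Or.inl ⟨h, ChvatalTree.isRatAffine_eval_of_cc_eq_zero h⟩
  · exact Or.inr (ChvatalTree.hasCeilDecomposition_of_cc_pos hT h)
end

section
/- Let C = {x ∈ ℝ^n × ℤ^q : f_i(x) ≤ b_i, i = 1, …, m} be a system of affine Chvátal inequalities where each f_i is given by a binary tree representation, with total ceiling count c ≥ 1 (the sum of the ceiling counts of these trees). Then there exists a system P = {(x, z) ∈ ℝ^n × ℤ^q × ℤ : f'_i(x, z) ≤ b'_i, i = 1, …, m+1} of affine Chvátal inequalities in one additional integer variable z, whose functions admit binary tree representations with total ceiling count at most c − 1, such that C is the projection of P onto the x-coordinates. -/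
/-!
Take a tree with a ceiling and replace one of its subtrees `⌈g⌉` by a new variable `z`; call the
result `T`, so that `f x = T (x, ⌈g x⌉)`. All multipliers are nonnegative, so `T` is nondecreasing
in `z`, and for integer `z` the new inequality `g x - z ≤ 0` says exactly `⌈g x⌉ ≤ z`. Hence
`f x ≤ b` holds iff some integer `z` satisfies both `T (x, z) ≤ b` and `g x - z ≤ 0`. The ceiling
that was replaced is gone, and those of `g` move from `T` into the new inequality.
-/

namespace ChvatalTree

variable {k : ℕ}

lemma eval_leaf_snoc (a : Fin k → ℚ) (c d : ℚ) (v : Fin k → ℝ) (z : ℝ) :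
    (leaf (Fin.snoc a c) d).eval (Fin.snoc v z) = (leaf a d).eval v + c * z := by
  simp only [eval, Fin.sum_univ_castSucc, Fin.snoc_castSucc, Fin.snoc_last]
  ring

def lift : ChvatalTree k → ChvatalTree (k + 1)
  | leaf a c => leaf (Fin.snoc a 0) c
  | ceil t => ceil t.lift
  | scale a t => scale a t.lift
  | comb a b t₁ t₂ => comb a b t₁.lift t₂.lift

@[simp]
lemma eval_lift (t : ChvatalTree k) (v : Fin k → ℝ) (z : ℝ) :
    t.lift.eval (Fin.snoc v z) = t.eval v := by
  induction t with
  | leaf a c => simp [lift, eval_leaf_snoc]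
  | ceil t ih => simp [lift, eval, ih]
  | scale a t ih => simp [lift, eval, ih]
  | comb a b t₁ t₂ ih₁ ih₂ => simp [lift, eval, ih₁, ih₂]

lemma Valid.lift {t : ChvatalTree k} (h : t.Valid) : t.lift.Valid := by
  induction t with
  | leaf => trivial
  | ceil t ih => exact ih h
  | scale a t ih => exact ⟨h.1, ih h.2⟩
  | comb a b t₁ t₂ ih₁ ih₂ => exact ⟨h.1, h.2.1, ih₁ h.2.2.1, ih₂ h.2.2.2⟩

@[simp]
lemma cc_lift (t : ChvatalTree k) : t.lift.cc = t.cc := by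
  induction t with
  | leaf => rfl
  | ceil t ih => simp [lift, cc, ih]
  | scale a t ih => simp [lift, cc, ih]
  | comb a b t₁ t₂ ih₁ ih₂ => simp [lift, cc, ih₁, ih₂]

def lastVar (c : ℚ) : ChvatalTree (k + 1) := leaf (Fin.snoc 0 c) 0

@[simp]
lemma eval_lastVar (c : ℚ) (v : Fin k → ℝ) (z : ℝ) :
    (lastVar c).eval (Fin.snoc v z) = c * z := by
  simp [lastVar, eval_leaf_snoc, eval]

/-- `extractCeil t = (T, g)`, where `T` is `t` with its first subtree of the form `⌈g⌉` replaced
by the last variable. -/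
def extractCeil : ChvatalTree k → ChvatalTree (k + 1) × ChvatalTree k
  | leaf a c => ((leaf a c).lift, leaf a c)
  | ceil t => (lastVar 1, t)
  | scale a t => (scale a t.extractCeil.1, t.extractCeil.2)
  | comb a b t₁ t₂ =>
      if t₁.cc = 0 then (comb a b t₁.lift t₂.extractCeil.1, t₂.extractCeil.2)
      else (comb a b t₁.extractCeil.1 t₂.lift, t₁.extractCeil.2)

lemma eval_extractCeil (t : ChvatalTree k) (v : Fin k → ℝ) :
    t.extractCeil.1.eval (Fin.snoc v ⌈t.extractCeil.2.eval v⌉) = t.eval v := by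
  induction t with
  | leaf => simp [extractCeil]
  | ceil t => simp [extractCeil, eval]
  | scale a t ih => simp [extractCeil, eval, ih]
  | comb a b t₁ t₂ ih₁ ih₂ =>
    by_cases h₁ : t₁.cc = 0 <;> simp [extractCeil, h₁, eval, ih₁, ih₂]

lemma monotone_eval_extractCeil {t : ChvatalTree k} (ht : t.Valid) (v : Fin k → ℝ) :
    Monotone fun z => t.extractCeil.1.eval (Fin.snoc v z) := by
  induction t with
  | leaf => simpa [extractCeil] using monotone_const
  | ceil t => exact fun _ _ h => by simpa [extractCeil] using h
  | scale a t ih => exact (ih ht.2).const_mul (by exact_mod_cast ht.1)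
  | comb a b t₁ t₂ ih₁ ih₂ =>
    obtain ⟨ha, hb, ht₁, ht₂⟩ := ht
    have ha : (0 : ℝ) ≤ a := by exact_mod_cast ha
    have hb : (0 : ℝ) ≤ b := by exact_mod_cast hb
    by_cases h₁ : t₁.cc = 0
    · simpa [extractCeil, h₁, eval] using
        (monotone_const.const_mul ha).add ((ih₂ ht₂).const_mul hb)
    · simpa [extractCeil, h₁, eval] using
        ((ih₁ ht₁).const_mul ha).add (monotone_const.const_mul hb)

lemma Valid.extractCeil {t : ChvatalTree k} (ht : t.Valid) :
    t.extractCeil.1.Valid ∧ t.extractCeil.2.Valid := by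
  induction t with
  | leaf => exact ⟨ht.lift, ht⟩
  | ceil t => exact ⟨trivial, ht⟩
  | scale a t ih => exact ⟨⟨ht.1, (ih ht.2).1⟩, (ih ht.2).2⟩
  | comb a b t₁ t₂ ih₁ ih₂ =>
    obtain ⟨ha, hb, ht₁, ht₂⟩ := ht
    by_cases h₁ : t₁.cc = 0
    · simp only [ChvatalTree.extractCeil, h₁, if_true]
      exact ⟨⟨ha, hb, ht₁.lift, (ih₂ ht₂).1⟩, (ih₂ ht₂).2⟩
    · simp only [ChvatalTree.extractCeil, h₁, if_false]
      exact ⟨⟨ha, hb, (ih₁ ht₁).1, ht₂.lift⟩, (ih₁ ht₁).2⟩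

lemma cc_extractCeil {t : ChvatalTree k} (ht : t.cc ≠ 0) :
    t.extractCeil.1.cc + t.extractCeil.2.cc + 1 = t.cc := by
  induction t with
  | leaf => exact absurd rfl ht
  | ceil t => simp [extractCeil, lastVar, cc]
  | scale a t ih => simpa [extractCeil, cc] using ih ht
  | comb a b t₁ t₂ ih₁ ih₂ =>
    by_cases h₁ : t₁.cc = 0
    · have := ih₂ (by simpa [cc, h₁] using ht)
      simp only [extractCeil, h₁, if_true, cc, cc_lift]
      omega
    · have := ih₁ h₁
      simp only [extractCeil, h₁, if_false, cc, cc_lift]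
      omega

def ceilGap (g : ChvatalTree k) : ChvatalTree (k + 1) := comb 1 1 g.lift (lastVar (-1))

@[simp]
lemma eval_ceilGap (g : ChvatalTree k) (v : Fin k → ℝ) (z : ℝ) :
    (ceilGap g).eval (Fin.snoc v z) = g.eval v - z := by
  simp [ceilGap, eval]
  ring

lemma Valid.ceilGap {g : ChvatalTree k} (hg : g.Valid) : (ceilGap g).Valid :=
  ⟨zero_le_one, zero_le_one, hg.lift, trivial⟩

@[simp]
lemma cc_ceilGap (g : ChvatalTree k) : (ceilGap g).cc = g.cc := by
  simp [ceilGap, lastVar, cc]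

end ChvatalTree

open ChvatalTree

section ReduceSystem

variable {k m : ℕ} (f : Fin m → ChvatalTree k) (i₀ : Fin m)

def reduceSystem : Fin (m + 1) → ChvatalTree (k + 1) :=
  Fin.snoc (Function.update (fun i => (f i).lift) i₀ (f i₀).extractCeil.1)
    (ceilGap (f i₀).extractCeil.2)

lemma valid_reduceSystem (hf : ∀ i, (f i).Valid) (i : Fin (m + 1)) :
    (reduceSystem f i₀ i).Valid := by
  induction i using Fin.lastCases with
  | last => simpa [reduceSystem] using (hf i₀).extractCeil.2.ceilGap
  | cast i =>
    rcases eq_or_ne i i₀ with rfl | hi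
    · simpa [reduceSystem] using (hf i).extractCeil.1
    · simpa [reduceSystem, hi] using (hf i).lift

lemma sum_cc_reduceSystem (h : (f i₀).cc ≠ 0) :
    ∑ i, (reduceSystem f i₀ i).cc + 1 = ∑ i, (f i).cc := by
  classical
  have hupdate : (fun i => (Function.update (fun i => (f i).lift) i₀ (f i₀).extractCeil.1 i).cc)
      = Function.update (fun i => (f i).cc) i₀ (f i₀).extractCeil.1.cc := by
    ext i
    rcases eq_or_ne i i₀ with rfl | hi <;> simp [*]
  simp only [reduceSystem, Fin.sum_univ_castSucc, Fin.snoc_castSucc, Fin.snoc_last, cc_ceilGap,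
    hupdate, Finset.sum_update_of_mem (Finset.mem_univ i₀)]
  rw [← Finset.add_sum_erase _ _ (Finset.mem_univ i₀), ← Finset.sdiff_singleton_eq_erase,
    ← cc_extractCeil h]
  ring

lemma exists_int_forall_eval_reduceSystem_le_iff (hf : ∀ i, (f i).Valid) (b : Fin m → ℝ)
    (v : Fin k → ℝ) :
    (∃ z : ℤ, ∀ i,
        (reduceSystem f i₀ i).eval (Fin.snoc v z) ≤ (Fin.snoc b 0 : Fin (m + 1) → ℝ) i) ↔
      ∀ i, (f i).eval v ≤ b i := by
  simp only [Fin.forall_fin_succ', reduceSystem, Fin.snoc_castSucc, Fin.snoc_last, eval_ceilGap,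
    sub_nonpos]
  constructor
  · rintro ⟨z, hle, hgz⟩ i
    rcases eq_or_ne i i₀ with rfl | hi
    · calc (f i).eval v
          = (f i).extractCeil.1.eval (Fin.snoc v ⌈(f i).extractCeil.2.eval v⌉) :=
            (eval_extractCeil _ _).symm
        _ ≤ (f i).extractCeil.1.eval (Fin.snoc v z) :=
            monotone_eval_extractCeil (hf i) v (by exact_mod_cast Int.ceil_le.2 hgz)
        _ ≤ b i := by simpa using hle i
    · simpa [hi] using hle i
  · intro hle
    refine ⟨⌈(f i₀).extractCeil.2.eval v⌉, fun i => ?_, Int.le_ceil _⟩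
    rcases eq_or_ne i i₀ with rfl | hi
    · simpa [eval_extractCeil] using hle i
    · simpa [hi] using hle i

end ReduceSystem

/-- A system of affine Chvátal inequalities over `ℝ^n × ℤ^q` with total
ceiling count `c ≥ 1` is the projection (onto the original variables) of a system of `m+1`
affine Chvátal inequalities in one extra integer variable, with total ceiling count
at most `c - 1`. -/
theorem reduce_ceiling_count {n q m : ℕ} (f : Fin m → ChvatalTree (n + q))
    (hf : ∀ i, (f i).Valid) (b : Fin m → ℝ) (hcc : 1 ≤ ∑ i, (f i).cc) :
    ∃ (f' : Fin (m + 1) → ChvatalTree (n + q + 1)) (b' : Fin (m + 1) → ℝ),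
      (∀ i, (f' i).Valid) ∧
      (∑ i, (f' i).cc) ≤ (∑ i, (f i).cc) - 1 ∧
      {v : Fin (n + q) → ℝ |
          (∀ j : Fin q, ∃ k : ℤ, v (Fin.natAdd n j) = (k : ℝ)) ∧
          ∀ i, (f i).eval v ≤ b i}
        = {v : Fin (n + q) → ℝ | ∃ zval : ℝ, (∃ k : ℤ, zval = (k : ℝ)) ∧
            (∀ j : Fin q, ∃ k : ℤ, v (Fin.natAdd n j) = (k : ℝ)) ∧
            ∀ i, (f' i).eval (Fin.snoc v zval) ≤ b' i} := by
  obtain ⟨i₀, -, hi₀⟩ := Finset.exists_ne_zero_of_sum_ne_zero (Nat.one_le_iff_ne_zero.mp hcc)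
  refine ⟨reduceSystem f i₀, Fin.snoc b 0, valid_reduceSystem f i₀ hf, ?_, ?_⟩
  · have := sum_cc_reduceSystem f i₀ hi₀
    omega
  · ext v
    simp only [Set.mem_ofPred_eq, ← exists_int_forall_eval_reduceSystem_le_iff f i₀ hf b v]
    constructor
    · rintro ⟨hint, z, hz⟩
      exact ⟨z, ⟨z, rfl⟩, hint, hz⟩
    · rintro ⟨_, ⟨z, rfl⟩, hint, hz⟩
      exact ⟨hint, z, hz⟩
end

section
/- Let A ∈ ℚ^{m×n} be a rational matrix, let b ∈ ℝ^m (not necessarily rational), and let P = {x ∈ ℝ^n : Ax ≥ b}. Let α ∈ ℤ^n and β ∈ ℝ be such that α·x ≥ β holds for all x ∈ P, and let F = P ∩ {x : α·x = β} be the corresponding face of P. Then for every t ∈ ℕ, F^{(t)} = P^{(t)} ∩ F, where the superscript (t) denotes the t-th iterated Chvátal closure. -/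
/-!
Polyhedra `{x | d ≤ C x}` with integral `C` and real `d` are stable under the Chvátal closure:
Farkas' lemma turns a valid inequality `c·x ≥ δ` into `y ≥ 0` with `y C = c` and `y d ≥ δ`, and
splitting `y = ⌊y⌋ + fract y` shows that `c·x ≥ ⌈δ⌉` already follows from the rounded constraints
and from one cut whose normal `fract y · C` lies in a fixed finite box. A rational `A` becomes
integral after scaling its rows.

For the face `F = Q ∩ {α·x = β}`, Farkas' lemma applied to `F` writes a valid `c·x ≥ δ` with a real
multiplier `λ` on `α·x = β`; adding `k ≥ -λ` copies of `α·x ≥ β` makes `(c + kα)·x ≥ δ + kβ` valid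
on `Q`. A point of `Q' ∩ F` forces `β ∈ ℤ`, so the rounded cut of `Q` gives `c·x ≥ ⌈δ⌉`. Hence
`F' = Q' ∩ F`, and induction on `t` gives the theorem. Farkas' lemma itself is proved by
Fourier–Motzkin elimination.
-/

/-- The Chvátal closure of `Q ⊆ ℝ^n`: intersection of the half-spaces `c·x ≥ ⌈δ⌉` over all
integral `c` and real `δ` such that `c·x ≥ δ` is valid for `Q`. -/
def chvatalClosure {n : ℕ} (Q : Set (Fin n → ℝ)) : Set (Fin n → ℝ) :=
  {x | ∀ (c : Fin n → ℤ) (δ : ℝ),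
    (∀ y ∈ Q, δ ≤ ∑ j, (c j : ℝ) * y j) → (⌈δ⌉ : ℝ) ≤ ∑ j, (c j : ℝ) * x j}

/-- The `t`-th iterated Chvátal closure. -/
def iterChvatal {n : ℕ} (Q : Set (Fin n → ℝ)) : ℕ → Set (Fin n → ℝ)
  | 0 => Q
  | t + 1 => chvatalClosure (iterChvatal Q t)

open Matrix

lemma exists_forall_le_forall_ge {ι κ : Type*} [Finite ι] [Finite κ] (f : ι → ℝ) (g : κ → ℝ)
    (h : ∀ i j, f i ≤ g j) : ∃ x, (∀ i, f i ≤ x) ∧ ∀ j, x ≤ g j := by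
  rcases isEmpty_or_nonempty ι with _ | _
  · exact ⟨⨅ j, g j, isEmptyElim, ciInf_le (Finite.bddBelow_range g)⟩
  · exact ⟨⨆ i, f i, le_ciSup (Finite.bddAbove_range f), fun j => ciSup_le fun i => h i j⟩

lemma exists_forall_le_mul {ι : Type*} [Finite ι] (a v : ι → ℝ)
    (hzero : ∀ i, a i = 0 → v i ≤ 0)
    (hpair : ∀ i j, 0 < a i → a j < 0 → a i * v j ≤ a j * v i) :
    ∃ x : ℝ, ∀ i, v i ≤ a i * x := by
  obtain ⟨x, hlo, hup⟩ := exists_forall_le_forall_ge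
    (fun i : {i // 0 < a i} => v i / a i) (fun j : {j // a j < 0} => v j / a j)
    fun ⟨i, hi⟩ ⟨j, hj⟩ => by
      rw [div_le_iff₀ hi, div_mul_eq_mul_div, le_div_iff_of_neg hj]
      linarith [hpair i j hi hj]
  refine ⟨x, fun i => ?_⟩
  rcases lt_trichotomy (a i) 0 with hi | hi | hi
  · have := hup ⟨i, hi⟩
    rw [le_div_iff_of_neg hi] at this
    linarith
  · simpa [hi] using hzero i hi
  · have := hlo ⟨i, hi⟩
    rw [div_le_iff₀ hi] at this
    linarith

section FourierMotzkin

variable {ι : Type*} [DecidableEq ι]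

noncomputable def fourierMotzkinWeights (a : ι → ℝ) : Matrix ((ι × ι) ⊕ ι) ι ℝ :=
  Matrix.of fun
    | .inl (i, j) => if 0 < a i ∧ a j < 0 then Pi.single i (-a j) + Pi.single j (a i) else 0
    | .inr i => if a i = 0 then Pi.single i 1 else 0

lemma fourierMotzkinWeights_nonneg (a : ι → ℝ) (t : (ι × ι) ⊕ ι) :
    0 ≤ fourierMotzkinWeights a t := by
  rcases t with ⟨i, j⟩ | i
  · change 0 ≤ ite _ _ _
    split_ifs with h
    · exact add_nonneg (Pi.single_nonneg.2 (neg_nonneg.2 h.2.le)) (Pi.single_nonneg.2 h.1.le)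
    · exact le_rfl
  · change 0 ≤ ite _ _ _
    split_ifs
    · exact Pi.single_nonneg.2 zero_le_one
    · exact le_rfl

lemma fourierMotzkinWeights_mulVec_inl [Fintype ι] (a v : ι → ℝ) (i j : ι) :
    (fourierMotzkinWeights a *ᵥ v) (.inl (i, j)) =
      if 0 < a i ∧ a j < 0 then -a j * v i + a i * v j else 0 := by
  change ite _ _ _ ⬝ᵥ v = _
  split_ifs <;> simp [add_dotProduct]

lemma fourierMotzkinWeights_mulVec_inr [Fintype ι] (a v : ι → ℝ) (i : ι) :
    (fourierMotzkinWeights a *ᵥ v) (.inr i) = if a i = 0 then v i else 0 := by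
  change ite _ _ _ ⬝ᵥ v = _
  split_ifs <;> simp

lemma fourierMotzkinWeights_mulVec_self [Fintype ι] (a : ι → ℝ) :
    fourierMotzkinWeights a *ᵥ a = 0 := by
  ext (⟨i, j⟩ | i)
  · rw [fourierMotzkinWeights_mulVec_inl]
    split_ifs <;> simp [mul_comm]
  · rw [fourierMotzkinWeights_mulVec_inr]
    split_ifs with h <;> simp [h]

lemma exists_le_mul_of_fourierMotzkinWeights_mulVec_nonpos [Fintype ι] {a v : ι → ℝ}
    (h : fourierMotzkinWeights a *ᵥ v ≤ 0) : ∃ x : ℝ, ∀ i, v i ≤ a i * x := by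
  refine exists_forall_le_mul a v (fun i hi => ?_) fun i j hi hj => ?_
  · simpa [fourierMotzkinWeights_mulVec_inr, hi] using h (.inr i)
  · have := h (.inl (i, j))
    rw [fourierMotzkinWeights_mulVec_inl, if_pos ⟨hi, hj⟩] at this
    simp only [Pi.zero_apply] at this
    linarith

end FourierMotzkin

theorem exists_farkas_certificate {n : ℕ} {ι : Type*} [Fintype ι] (M : Matrix ι (Fin n) ℝ)
    (b : ι → ℝ) (h : ¬ ∃ x, b ≤ M *ᵥ x) : ∃ y, 0 ≤ y ∧ y ᵥ* M = 0 ∧ 0 < y ⬝ᵥ b := by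
  classical
  induction n generalizing ι with
  | zero =>
    obtain ⟨i, hi⟩ : ∃ i, (M *ᵥ 0) i < b i := by
      simpa [Pi.le_def] using fun hb => h ⟨0, hb⟩
    refine ⟨Pi.single i 1, Pi.single_nonneg.2 zero_le_one, Subsingleton.elim _ _, ?_⟩
    simpa using hi
  | succ n ih =>
    set a : ι → ℝ := fun i => M i 0
    set W := fourierMotzkinWeights a
    set M' := M.submatrix id Fin.succ
    have hproj : ¬ ∃ x', W *ᵥ b ≤ (W * M') *ᵥ x' := by
      rintro ⟨x', hx'⟩
      obtain ⟨x₀, hx₀⟩ := exists_le_mul_of_fourierMotzkinWeights_mulVec_nonpos (a := a)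
        (v := b - M' *ᵥ x') (by rwa [mulVec_sub, mulVec_mulVec, sub_nonpos])
      refine h ⟨Fin.cons x₀ x', fun i => ?_⟩
      have hrow : (M *ᵥ Fin.cons x₀ x') i = a i * x₀ + (M' *ᵥ x') i := by
        simp [mulVec, dotProduct, Fin.sum_univ_succ, M', a]
      have := hx₀ i
      simp only [Pi.sub_apply] at this
      linarith
    obtain ⟨y', hy'0, hy'M, hy'b⟩ := ih _ _ hproj
    refine ⟨y' ᵥ* W, fun i => ?_, ?_, ?_⟩
    · exact dotProduct_nonneg_of_nonneg hy'0 fun t => fourierMotzkinWeights_nonneg _ t i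
    · ext k
      refine Fin.cases ?_ (fun k => ?_) k
      · change y' ᵥ* W ⬝ᵥ a = 0
        rw [← dotProduct_mulVec, fourierMotzkinWeights_mulVec_self, dotProduct_zero]
      · change (y' ᵥ* W ᵥ* M') k = 0
        rw [vecMul_vecMul, hy'M, Pi.zero_apply]
    · rwa [← dotProduct_mulVec]

section AffineFarkas

variable {n : ℕ} {ι : Type*} {C : Matrix ι (Fin n) ℝ} {d : ι → ℝ}
  {c : Fin n → ℝ} {δ : ℝ}

lemma not_exists_homogenized_violation (hne : ∃ q, d ≤ C *ᵥ q)
    (hval : ∀ x, d ≤ C *ᵥ x → δ ≤ c ⬝ᵥ x) :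
    ¬ ∃ (t : ℝ) (x : Fin n → ℝ), 0 ≤ t ∧ t • d ≤ C *ᵥ x ∧ 1 ≤ δ * t - c ⬝ᵥ x := by
  rintro ⟨t, x, ht, hx, hcx⟩
  obtain ⟨q, hq⟩ := hne
  have hcq := hval q hq
  -- for small `s > 0`, `(x + s • q) / (t + s)` lies in the polyhedron but violates `c ⬝ᵥ · ≥ δ`
  set s := (c ⬝ᵥ q - δ + 1)⁻¹
  have hs : 0 < s := inv_pos.2 (by linarith)
  have hsq : s * (c ⬝ᵥ q - δ) < 1 := by
    rw [← div_eq_inv_mul, div_lt_one (by linarith)]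
    linarith
  have hτ : 0 < t + s := by linarith
  have hmem : d ≤ C *ᵥ ((t + s)⁻¹ • (x + s • q)) := fun i => by
    have := add_le_add (hx i) (mul_le_mul_of_nonneg_left (hq i) hs.le)
    simp only [Pi.smul_apply, Pi.add_apply, smul_eq_mul, mulVec_smul, mulVec_add] at this ⊢
    rw [le_inv_mul_iff₀ hτ]
    linarith
  have := hval _ hmem
  rw [dotProduct_smul, smul_eq_mul, le_inv_mul_iff₀ hτ, dotProduct_add, dotProduct_smul,
    smul_eq_mul] at this
  nlinarith

theorem exists_nonneg_vecMul_eq_of_forall_le [Fintype ι] (hne : ∃ q, d ≤ C *ᵥ q)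
    (hval : ∀ x, d ≤ C *ᵥ x → δ ≤ c ⬝ᵥ x) : ∃ y, 0 ≤ y ∧ y ᵥ* C = c ∧ δ ≤ y ⬝ᵥ d := by
  -- the system `t • d ≤ C *ᵥ x`, `1 ≤ δ * t - c ⬝ᵥ x`, `0 ≤ t` in the variables `vecCons t x`
  set H : Matrix (ι ⊕ Fin 2) (Fin (n + 1)) ℝ :=
    fromRows (of fun i => vecCons (-d i) (C i)) (of ![vecCons δ (-c), vecCons 1 0])
  have hinf : ¬ ∃ z, Sum.elim (0 : ι → ℝ) ![1, 0] ≤ H *ᵥ z := by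
    rintro ⟨z, hz⟩
    refine not_exists_homogenized_violation hne hval ⟨vecHead z, vecTail z, ?_, fun i => ?_, ?_⟩
    · simpa [H, mulVec, cons_dotProduct] using hz (.inr 1)
    · simpa [H, mulVec, cons_dotProduct, mul_comm] using hz (.inl i)
    · rw [le_sub_iff_add_le]
      simpa [H, mulVec, cons_dotProduct] using hz (.inr 0)
  obtain ⟨Y, hY0, hYH, hYpos⟩ := exists_farkas_certificate H _ hinf
  set y := Y ∘ Sum.inl
  set μ := Y (.inr 0)
  have hμ : 0 < μ := by simpa [dotProduct, Fin.sum_univ_two, μ] using hYpos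
  have hcol0 : y ⬝ᵥ d = μ * δ + Y (.inr 1) := by
    have h0 : -(y ⬝ᵥ d) + (μ * δ + Y (.inr 1)) = 0 := by
      simpa [H, vecMul, dotProduct, Fin.sum_univ_two, y, μ] using congrFun hYH 0
    linarith
  have hcol : y ᵥ* C = μ • c := by
    ext k
    have hk : (y ᵥ* C) k + -(μ * c k) = 0 := by
      simpa [H, vecMul, dotProduct, Fin.sum_univ_two, y, μ] using congrFun hYH k.succ
    rw [Pi.smul_apply, smul_eq_mul]
    linarith
  refine ⟨μ⁻¹ • y, fun i => mul_nonneg (inv_pos.2 hμ).le (hY0 _), ?_, ?_⟩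
  · rw [smul_vecMul, hcol, inv_smul_smul₀ hμ.ne']
  · rw [smul_dotProduct, hcol0, smul_eq_mul, mul_add, inv_mul_cancel_left₀ hμ.ne']
    have := mul_nonneg (inv_pos.2 hμ).le (hY0 (.inr 1))
    linarith

theorem exists_nat_forall_le_add_smul [Fintype ι] {α : Fin n → ℝ} {β : ℝ}
    (hα : ∀ x, d ≤ C *ᵥ x → β ≤ α ⬝ᵥ x) (hne : ∃ x, d ≤ C *ᵥ x ∧ α ⬝ᵥ x = β)
    (hc : ∀ x, d ≤ C *ᵥ x → α ⬝ᵥ x = β → δ ≤ c ⬝ᵥ x) :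
    ∃ k : ℕ, ∀ x, d ≤ C *ᵥ x → δ + k * β ≤ (c + (k : ℝ) • α) ⬝ᵥ x := by
  set C₂ := fromRows C (of ![α, -α])
  set d₂ := Sum.elim d ![β, -β]
  have hmem (x : Fin n → ℝ) : d₂ ≤ C₂ *ᵥ x ↔ d ≤ C *ᵥ x ∧ α ⬝ᵥ x = β := by
    simp [C₂, d₂, Pi.le_def, Sum.forall, Fin.forall_fin_two, le_antisymm_iff, and_comm]
  obtain ⟨y, hy0, hyC, hyd⟩ := exists_nonneg_vecMul_eq_of_forall_le (C := C₂) (d := d₂)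
    (by simpa only [hmem] using hne) fun x hx => hc x ((hmem x).1 hx).1 ((hmem x).1 hx).2
  set l := y (.inr 0) - y (.inr 1)
  have hyC' : y ∘ Sum.inl ᵥ* C + l • α = c := by
    rw [← hyC]
    simp [C₂, l, sub_eq_add_neg, add_smul, vecHead, vecTail]
  have hyd' : y ⬝ᵥ d₂ = y ∘ Sum.inl ⬝ᵥ d + l * β := by
    simp [d₂, dotProduct, Fintype.sum_sum_type, l, sub_eq_add_neg, add_mul]
  obtain ⟨k, hk⟩ : ∃ k : ℕ, 0 ≤ l + k := ⟨⌈-l⌉₊, by linarith [Nat.le_ceil (-l)]⟩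
  refine ⟨k, fun x hx => ?_⟩
  rw [← hyC', add_assoc, ← add_smul, add_dotProduct, smul_dotProduct, smul_eq_mul,
    ← dotProduct_mulVec]
  have hrows : y ∘ Sum.inl ⬝ᵥ d ≤ y ∘ Sum.inl ⬝ᵥ (C *ᵥ x) :=
    dotProduct_le_dotProduct_of_nonneg_left hx fun i => hy0 (.inl i)
  linarith [mul_le_mul_of_nonneg_left (hα x hx) hk]

end AffineFarkas

section Chvatal

variable {n : ℕ}

-- Integral constraint rows with real right-hand sides; the vertices need not be integral.
def IsIntPolyhedron (Q : Set (Fin n → ℝ)) : Prop :=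
  ∃ (ι : Type) (_ : Fintype ι) (C : Matrix ι (Fin n) ℤ) (d : ι → ℝ),
    Q = {x | d ≤ C.map Int.cast *ᵥ x}

lemma isIntPolyhedron_halfspace (c : Fin n → ℤ) (δ : ℝ) :
    IsIntPolyhedron {x | δ ≤ Int.cast ∘ c ⬝ᵥ x} :=
  ⟨Unit, inferInstance, of fun _ => c, fun _ => δ, by ext x; exact ⟨fun h _ => h, fun h => h ()⟩⟩

lemma isIntPolyhedron_univ : IsIntPolyhedron (Set.univ : Set (Fin n → ℝ)) :=
  ⟨Empty, inferInstance, 0, 0, by ext; simp⟩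

lemma isIntPolyhedron_empty : IsIntPolyhedron (∅ : Set (Fin n → ℝ)) := by
  convert isIntPolyhedron_halfspace 0 1
  ext
  simp

lemma IsIntPolyhedron.iInter {κ : Type} [Finite κ] {Q : κ → Set (Fin n → ℝ)}
    (h : ∀ k, IsIntPolyhedron (Q k)) : IsIntPolyhedron (⋂ k, Q k) := by
  choose ι _ C d hQ using h
  have := Fintype.ofFinite κ
  refine ⟨Σ k, ι k, inferInstance, fun p => C p.1 p.2, fun p => d p.1 p.2, ?_⟩
  ext x
  simp only [hQ, Set.mem_iInter, Set.mem_ofPred_eq, Pi.le_def, Sigma.forall]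
  rfl

lemma chvatalClosure_mono {Q Q' : Set (Fin n → ℝ)} (h : Q ⊆ Q') :
    chvatalClosure Q ⊆ chvatalClosure Q' :=
  fun _ hx c δ hδ => hx c δ fun y hy => hδ y (h hy)

lemma chvatalClosure_subset_halfspace {Q : Set (Fin n → ℝ)} {c : Fin n → ℤ} {δ : ℝ}
    (h : ∀ y ∈ Q, δ ≤ Int.cast ∘ c ⬝ᵥ y) : chvatalClosure Q ⊆ {x | δ ≤ Int.cast ∘ c ⬝ᵥ x} :=
  fun _ hx => (Int.le_ceil δ).trans (hx c δ h)

lemma IsIntPolyhedron.chvatalClosure_subset {Q : Set (Fin n → ℝ)} (hQ : IsIntPolyhedron Q) :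
    chvatalClosure Q ⊆ Q := by
  obtain ⟨ι, _, C, d, rfl⟩ := hQ
  exact fun x hx i => chvatalClosure_subset_halfspace (c := C i) (fun y (hy : d ≤ _) => hy i) hx

def chvatalCut (Q : Set (Fin n → ℝ)) (c : Fin n → ℤ) : Set (Fin n → ℝ) :=
  {x | ∀ δ : ℝ, (∀ y ∈ Q, δ ≤ Int.cast ∘ c ⬝ᵥ y) → (⌈δ⌉ : ℝ) ≤ Int.cast ∘ c ⬝ᵥ x}

lemma chvatalClosure_eq_iInter_chvatalCut (Q : Set (Fin n → ℝ)) :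
    chvatalClosure Q = ⋂ c, chvatalCut Q c := by
  ext x
  simp only [Set.mem_iInter]
  rfl

lemma isIntPolyhedron_chvatalCut (Q : Set (Fin n → ℝ)) (c : Fin n → ℤ) :
    IsIntPolyhedron (chvatalCut Q c) := by
  set S := (fun y => Int.cast ∘ c ⬝ᵥ y) '' Q
  have hvalid {δ : ℝ} : (∀ y ∈ Q, δ ≤ Int.cast ∘ c ⬝ᵥ y) ↔ δ ∈ lowerBounds S := by
    simp [S, lowerBounds]
  rcases Q.eq_empty_or_nonempty with rfl | hQ
  · convert isIntPolyhedron_empty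
    refine Set.eq_empty_of_forall_notMem fun x hx => ?_
    have := hx (Int.cast ∘ c ⬝ᵥ x + 1) (by simp)
    linarith [Int.le_ceil (Int.cast ∘ c ⬝ᵥ x + 1)]
  by_cases hS : BddBelow S
  · convert isIntPolyhedron_halfspace c ⌈sInf S⌉ using 1
    ext x
    refine ⟨fun hx => hx _ (hvalid.2 fun _ => csInf_le hS), fun hx δ hδ => le_trans ?_ hx⟩
    exact_mod_cast Int.ceil_mono (le_csInf (hQ.image _) (hvalid.1 hδ))
  · convert isIntPolyhedron_univ
    exact Set.eq_univ_of_forall fun x δ hδ => absurd ⟨δ, hvalid.1 hδ⟩ hS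

lemma abs_vecMul_le {ι m : Type*} [Fintype ι] {f : ι → ℝ} (hf0 : 0 ≤ f) (hf1 : f ≤ 1)
    (A : Matrix ι m ℝ) (j : m) : |(f ᵥ* A) j| ≤ ∑ i, |A i j| := by
  refine (Finset.abs_sum_le_sum_abs _ _).trans (Finset.sum_le_sum fun i _ => ?_)
  rw [abs_mul, abs_of_nonneg (hf0 i)]
  exact mul_le_of_le_one_left (abs_nonneg _) (hf1 i)

section Rounding

variable {ι : Type*} [Fintype ι] (C : Matrix ι (Fin n) ℤ) {c : Fin n → ℤ} {y : ι → ℝ}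

lemma intCast_comp_sub_floor_vecMul (hyC : y ᵥ* C.map Int.cast = Int.cast ∘ c) :
    (Int.cast ∘ (c - Int.floor ∘ y ᵥ* C) : Fin n → ℝ) = Int.fract ∘ y ᵥ* C.map Int.cast := by
  have hy : y = Int.cast ∘ (Int.floor ∘ y) + Int.fract ∘ y :=
    funext fun i => (Int.floor_add_fract (y i)).symm
  ext j
  rw [eq_sub_of_add_eq' hy.symm, sub_vecMul, hyC]
  simp only [Function.comp_apply, Pi.sub_apply, Int.cast_sub]
  congr 1
  exact RingHom.map_vecMul (Int.castRingHom ℝ) C _ j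

lemma abs_sub_floor_vecMul_le (hyC : y ᵥ* C.map Int.cast = Int.cast ∘ c) (j : Fin n) :
    |(c - Int.floor ∘ y ᵥ* C) j| ≤ ∑ i, |C i j| := by
  have h := abs_vecMul_le (f := Int.fract ∘ y) (fun i => Int.fract_nonneg (y i))
    (fun i => (Int.fract_lt_one (y i)).le) (C.map Int.cast) j
  rw [← intCast_comp_sub_floor_vecMul C hyC] at h
  simp only [Function.comp_apply, map_apply] at h
  exact_mod_cast h

lemma ceil_le_of_mem_chvatalCut (d : ι → ℝ) (hy0 : 0 ≤ y)
    (hyC : y ᵥ* C.map Int.cast = Int.cast ∘ c) {δ : ℝ} (hyd : δ ≤ y ⬝ᵥ d) {x : Fin n → ℝ}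
    (hrow : ∀ i, x ∈ chvatalCut {x | d ≤ C.map Int.cast *ᵥ x} (C i))
    (hrem : x ∈ chvatalCut {x | d ≤ C.map Int.cast *ᵥ x} (c - Int.floor ∘ y ᵥ* C)) :
    (⌈δ⌉ : ℝ) ≤ Int.cast ∘ c ⬝ᵥ x := by
  set C' : Matrix ι (Fin n) ℝ := C.map Int.cast
  set u := Int.floor ∘ y
  set f := Int.fract ∘ y
  have hyuf : y = Int.cast ∘ u + f := funext fun i => (Int.floor_add_fract (y i)).symm
  have hu0 : (0 : ι → ℝ) ≤ Int.cast ∘ u := fun i => Int.cast_nonneg (Int.floor_nonneg.2 (hy0 i))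
  have hf0 : 0 ≤ f := fun i => Int.fract_nonneg (y i)
  have hrow' (i : ι) : (⌈d i⌉ : ℝ) ≤ (C' *ᵥ x) i := hrow i (d i) fun z hz => hz i
  have hrem' : (⌈f ⬝ᵥ d⌉ : ℝ) ≤ f ⬝ᵥ (C' *ᵥ x) := by
    have hcast := intCast_comp_sub_floor_vecMul C hyC
    have := hrem (f ⬝ᵥ d) fun z hz => by
      rw [hcast, ← dotProduct_mulVec]
      exact dotProduct_le_dotProduct_of_nonneg_left hz hf0
    rwa [hcast, ← dotProduct_mulVec] at this
  set N : ℤ := u ⬝ᵥ (fun i => ⌈d i⌉) + ⌈f ⬝ᵥ d⌉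
  have hN : (N : ℝ) = Int.cast ∘ u ⬝ᵥ (fun i => (⌈d i⌉ : ℝ)) + ⌈f ⬝ᵥ d⌉ := by
    simp [N, dotProduct]
  have hδN : δ ≤ N := by
    rw [hN]
    calc δ ≤ y ⬝ᵥ d := hyd
      _ = Int.cast ∘ u ⬝ᵥ d + f ⬝ᵥ d := by rw [hyuf, add_dotProduct]
      _ ≤ _ := add_le_add
        (dotProduct_le_dotProduct_of_nonneg_left (fun i => Int.le_ceil (d i)) hu0) (Int.le_ceil _)
  calc (⌈δ⌉ : ℝ) ≤ N := by exact_mod_cast Int.ceil_le.2 hδN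
    _ ≤ Int.cast ∘ u ⬝ᵥ (C' *ᵥ x) + f ⬝ᵥ (C' *ᵥ x) := by
      rw [hN]
      exact add_le_add (dotProduct_le_dotProduct_of_nonneg_left hrow' hu0) hrem'
    _ = Int.cast ∘ c ⬝ᵥ x := by rw [← add_dotProduct, ← hyuf, dotProduct_mulVec, hyC]

end Rounding

lemma IsIntPolyhedron.exists_chvatalClosure_eq_iInter_chvatalCut {Q : Set (Fin n → ℝ)}
    (hQ : IsIntPolyhedron Q) :
    ∃ B : Fin n → ℤ, chvatalClosure Q = ⋂ c : Set.Icc (-B) B, chvatalCut Q c := by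
  obtain ⟨ι, _, C, d, rfl⟩ := hQ
  refine ⟨fun j => ∑ i, |C i j|, subset_antisymm ?_ fun x hx c δ hval => ?_⟩
  · rw [chvatalClosure_eq_iInter_chvatalCut]
    exact Set.iInter_mono' fun c => ⟨c.1, subset_rfl⟩
  have hcut {c' : Fin n → ℤ} (hc' : ∀ j, |c' j| ≤ ∑ i, |C i j|) :=
    Set.mem_iInter.1 hx ⟨c', fun j => (abs_le.1 (hc' j)).1, fun j => (abs_le.1 (hc' j)).2⟩
  rcases Set.eq_empty_or_nonempty {x | d ≤ C.map Int.cast *ᵥ x} with hQ | hQ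
  · have := hcut (c' := 0) (fun j => Finset.sum_nonneg fun i _ => abs_nonneg _) 1 (by simp [hQ])
    norm_num at this
  obtain ⟨y, hy0, hyC, hyd⟩ := exists_nonneg_vecMul_eq_of_forall_le hQ hval
  exact ceil_le_of_mem_chvatalCut C d hy0 hyC hyd
    (fun i => hcut fun j => Finset.single_le_sum (f := fun i => |C i j|)
      (fun i _ => abs_nonneg _) (Finset.mem_univ i))
    (hcut (abs_sub_floor_vecMul_le C hyC))

theorem isIntPolyhedron_chvatalClosure {Q : Set (Fin n → ℝ)} (hQ : IsIntPolyhedron Q) :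
    IsIntPolyhedron (chvatalClosure Q) := by
  obtain ⟨B, hB⟩ := hQ.exists_chvatalClosure_eq_iInter_chvatalCut
  rw [hB]
  exact IsIntPolyhedron.iInter fun c => isIntPolyhedron_chvatalCut Q c

lemma intCast_comp_add_nsmul (c α : Fin n → ℤ) (k : ℕ) :
    (Int.cast ∘ (c + k • α) : Fin n → ℝ) = Int.cast ∘ c + (k : ℝ) • Int.cast ∘ α := by
  ext
  simp

theorem IsIntPolyhedron.chvatalClosure_inter_hyperplane {Q : Set (Fin n → ℝ)}
    (hQ : IsIntPolyhedron Q) {α : Fin n → ℤ} {β : ℝ} (hα : ∀ x ∈ Q, β ≤ Int.cast ∘ α ⬝ᵥ x) :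
    chvatalClosure (Q ∩ {x | Int.cast ∘ α ⬝ᵥ x = β}) =
      chvatalClosure Q ∩ {x | Int.cast ∘ α ⬝ᵥ x = β} := by
  apply subset_antisymm
  · intro x hx
    have hneg : (Int.cast ∘ (-α) : Fin n → ℝ) = -(Int.cast ∘ α) := by
      ext
      simp
    have hle := chvatalClosure_subset_halfspace (c := -α) (δ := -β)
      (fun y hy => by rw [hneg, neg_dotProduct, hy.2]) hx
    have hge := chvatalClosure_subset_halfspace (c := α) (fun y hy => hy.2.ge) hx
    rw [Set.mem_ofPred_eq, hneg, neg_dotProduct, neg_le_neg_iff] at hle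
    exact ⟨chvatalClosure_mono Set.inter_subset_left hx, le_antisymm hle hge⟩
  · rintro x ⟨hxcl, hxα⟩ c δ hval
    have hxQ := hQ.chvatalClosure_subset hxcl
    -- the cut `⌈β⌉ ≤ α ⬝ᵥ x` at a point with `α ⬝ᵥ x = β` forces `β ∈ ℤ`
    obtain ⟨m, rfl⟩ : ∃ m : ℤ, β = m :=
      ⟨⌈β⌉, le_antisymm (Int.le_ceil β) (hxα ▸ hxcl α β hα)⟩
    obtain ⟨ι, _, C, d, rfl⟩ := hQ
    obtain ⟨k, hk⟩ := exists_nat_forall_le_add_smul (c := Int.cast ∘ c) hα ⟨x, hxQ, hxα⟩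
      fun y hy hyα => hval y ⟨hy, hyα⟩
    have hlift := hxcl (c + k • α) (δ + k * m) fun y hy => by
      rw [← intCast_comp_add_nsmul] at hk
      exact hk y hy
    change _ ≤ Int.cast ∘ (c + k • α) ⬝ᵥ x at hlift
    rw [intCast_comp_add_nsmul, add_dotProduct, smul_dotProduct, hxα, smul_eq_mul,
      ← Int.cast_natCast, ← Int.cast_mul, Int.ceil_add_intCast, Int.cast_add] at hlift
    change _ ≤ Int.cast ∘ c ⬝ᵥ x
    linarith

theorem isIntPolyhedron_iterChvatal {Q : Set (Fin n → ℝ)} (hQ : IsIntPolyhedron Q) :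
    ∀ t, IsIntPolyhedron (iterChvatal Q t)
  | 0 => hQ
  | t + 1 => isIntPolyhedron_chvatalClosure (isIntPolyhedron_iterChvatal hQ t)

theorem IsIntPolyhedron.iterChvatal_subset {Q : Set (Fin n → ℝ)} (hQ : IsIntPolyhedron Q) :
    ∀ t, iterChvatal Q t ⊆ Q
  | 0 => subset_rfl
  | t + 1 =>
    (isIntPolyhedron_iterChvatal hQ t).chvatalClosure_subset.trans (hQ.iterChvatal_subset t)

theorem IsIntPolyhedron.iterChvatal_inter_hyperplane {Q : Set (Fin n → ℝ)}
    (hQ : IsIntPolyhedron Q) {α : Fin n → ℤ} {β : ℝ} (hα : ∀ x ∈ Q, β ≤ Int.cast ∘ α ⬝ᵥ x) :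
    ∀ t, iterChvatal (Q ∩ {x | Int.cast ∘ α ⬝ᵥ x = β}) t =
      iterChvatal Q t ∩ {x | Int.cast ∘ α ⬝ᵥ x = β}
  | 0 => rfl
  | t + 1 => by
    rw [iterChvatal, iterChvatal, hQ.iterChvatal_inter_hyperplane hα t]
    exact (isIntPolyhedron_iterChvatal hQ t).chvatalClosure_inter_hyperplane
      fun x hx => hα x (hQ.iterChvatal_subset t hx)

lemma exists_pos_nat_mul_eq_intCast {ι : Type*} [Fintype ι] (q : ι → ℚ) :
    ∃ D : ℕ, 0 < D ∧ ∀ i, ∃ z : ℤ, (D : ℚ) * q i = z := by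
  refine ⟨∏ i, (q i).den, Finset.prod_pos fun i _ => (q i).pos, fun i => ?_⟩
  obtain ⟨e, he⟩ := Finset.dvd_prod_of_mem (fun i => (q i).den) (Finset.mem_univ i)
  refine ⟨(q i).num * e, ?_⟩
  rw [he]
  push_cast
  rw [mul_comm ((q i).den : ℚ), mul_assoc, mul_comm _ (q i), Rat.mul_den_eq_num]
  ring

theorem isIntPolyhedron_of_rat {ι : Type} [Fintype ι] (A : Matrix ι (Fin n) ℚ) (b : ι → ℝ) :
    IsIntPolyhedron {x | b ≤ A.map Rat.cast *ᵥ x} := by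
  choose D hD C hC using fun i => exists_pos_nat_mul_eq_intCast (A i)
  refine ⟨ι, inferInstance, of C, fun i => D i * b i, ?_⟩
  ext x
  refine forall_congr' fun i => ?_
  have hrow : ((of C).map Int.cast *ᵥ x) i = D i * (A.map Rat.cast *ᵥ x) i := by
    simp only [mulVec, dotProduct, map_apply, of_apply, Finset.mul_sum, ← mul_assoc]
    refine Finset.sum_congr rfl fun j _ => congrArg (· * x j) ?_
    exact_mod_cast (hC i j).symm
  rw [hrow, mul_le_mul_iff_right₀ (Nat.cast_pos.2 (hD i))]

end Chvatal

/-- Let `P = {x : Ax ≥ b}` with `A` rational, `b ∈ ℝ^m` arbitrary, let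
`α ∈ ℤ^n`, `β ∈ ℝ` with `α·x ≥ β` valid for `P`, and let `F = P ∩ {x : α·x = β}` be the
corresponding face. Then `F^{(t)} = P^{(t)} ∩ F` for all `t`. -/
theorem face_iterated_closure {m n : ℕ} (A : Matrix (Fin m) (Fin n) ℚ) (b : Fin m → ℝ)
    (P : Set (Fin n → ℝ)) (hP : P = {x | ∀ i, b i ≤ ∑ j, (A i j : ℝ) * x j})
    (α : Fin n → ℤ) (β : ℝ)
    (hvalid : ∀ x ∈ P, β ≤ ∑ j, (α j : ℝ) * x j)
    (F : Set (Fin n → ℝ)) (hF : F = P ∩ {x | ∑ j, (α j : ℝ) * x j = β}) :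
    ∀ t : ℕ, iterChvatal F t = iterChvatal P t ∩ F := by
  have hPint : IsIntPolyhedron P := hP ▸ isIntPolyhedron_of_rat A b
  have hH : {x : Fin n → ℝ | ∑ j, (α j : ℝ) * x j = β} = {x | Int.cast ∘ α ⬝ᵥ x = β} := rfl
  intro t
  rw [hF, hH, hPint.iterChvatal_inter_hyperplane hvalid t, ← Set.inter_assoc,
    Set.inter_eq_left.2 (hPint.iterChvatal_subset t)]
end
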